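/- arXiv:0909.3808 — 6 statements merged into one kernel-verified Lean document; each statement's English description precedes it below -/
import Mathlib

section
/- Let p be an odd prime and let a be a positive integer. Then in ℤ/pℤ: (1) ∑_{k=1}^{p^a−1} binom(3k, k)·(8^k)⁻¹ = (3/4)·(J(p^a | 5) − 1); (2) ∑_{k=1}^{p^a−1} C_k^{(2)}·(8^k)⁻¹ = (5/4)·(J(p^a | 5) − 1); (3) ∑_{k=1}^{p^a−1} (−4)^k·binom(3k, k) = (3/8)·(1 − J(p^a | 7)); (4) ∑_{k=1}^{p^a−1} (−4)^k·C_k^{(2)} = (7/4)·(1 − J(p^a | 7)). -/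
/-- Binomial coefficient with an integer lower index: zero for negative lower index. -/
def ibinom (n : ℕ) (j : ℤ) : ℕ := if 0 ≤ j then n.choose j.toNat else 0

/-- Second-order Catalan numbers `C_k^{(2)} = binom(3k,k) - 2·binom(3k,k-1)`. -/
def catalan2 (k : ℕ) : ℤ := (ibinom (3 * k) (k : ℤ) : ℤ) - 2 * (ibinom (3 * k) ((k : ℤ) - 1) : ℤ)

/-!
Write `q = p ^ a`. Since `binom(q - 1, k) ≡ (-1) ^ k` for `k < q`, the binomial theorem turns
`∑_{k < q} c⁻ᵏ [xᵏ] g(x) (1 + x)^{3k}` into the coefficient of `x^{q-1}` in `g F^{q-1}`, where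
`F = (1 + x)³ - c x`. As `F ^ q = F(x ^ q)`, the coefficients of `g F^{q-1}` below `x ^ q` are
those of the power series `g / F`. For `c = 8` and `c = -1/4` the cubic splits as
`F = (1 - r x)(1 - P x + Q x²)`, so partial fractions express them through `rⁿ` and the Lucas
sequence `Uₙ(P, Q)`. In `𝔽_p[ω]/(ω² - P ω + Q)` the element `t = 2ω - P` has `t² = P² - 4Q = D`,
hence `t ^ q = (D^{(p-1)/2})ᵃ t`; comparing with `ω ^ q = U_q ω - Q U_{q-1}` gives `U_q` and
`U_{q-1}`. Here `D` is `5` resp. `-7` times a square, and quadratic reciprocity identifies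
`(5/p)ᵃ` and `(-7/p)ᵃ` with `J(p^a | 5)` and `J(p^a | 7)`.
-/

open Polynomial
open scoped QuadraticAlgebra

namespace ZMod

variable {p : ℕ} [Fact p.Prime]

theorem natCast_two_pow_ne_zero (hp2 : p ≠ 2) (k : ℕ) : ((2 ^ k : ℕ) : ZMod p) ≠ 0 := by
  rw [Ne, natCast_eq_zero_iff]
  exact fun h => hp2 ((Nat.prime_dvd_prime_iff_eq Fact.out Nat.prime_two).mp
    ((Fact.out : p.Prime).dvd_of_dvd_pow h))

theorem pow_card_pow_sub_one_eq_one {x : ZMod p} (hx : x ≠ 0) (a : ℕ) : x ^ (p ^ a - 1) = 1 := by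
  refine mul_right_cancel₀ hx ?_
  rw [← pow_succ, Nat.sub_add_cancel (pow_pos (Fact.out : p.Prime).pos a), pow_card_pow, one_mul]

theorem mul_sq_pow_div_two (hp2 : p ≠ 2) (x : ZMod p) {y : ZMod p} (hy : y ≠ 0) :
    (x * y ^ 2) ^ (p / 2) = x ^ (p / 2) := by
  rw [mul_pow, ← pow_mul,
    Nat.two_mul_odd_div_two (Nat.odd_iff.mp ((Fact.out : p.Prime).odd_of_ne_two hp2)),
    pow_card_sub_one_eq_one hy, mul_one]

theorem cast_choose_card_pow_sub_one {a k : ℕ} (hk : k < p ^ a) :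
    ((p ^ a - 1).choose k : ZMod p) = (-1) ^ k := by
  induction k with
  | zero => simp
  | succ k ih =>
    have hpascal : (p ^ a - 1).choose k + (p ^ a - 1).choose (k + 1) = (p ^ a).choose (k + 1) := by
      rw [← Nat.choose_succ_succ', Nat.sub_add_cancel (by omega)]
    have hdvd : ((p ^ a).choose (k + 1) : ZMod p) = 0 :=
      (natCast_eq_zero_iff _ _).mpr ((Fact.out : p.Prime).dvd_choose_pow (by omega) (by omega))
    have := congrArg (Nat.cast : ℕ → ZMod p) hpascal
    push_cast at this
    rw [ih (by omega), hdvd] at this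
    linear_combination this

theorem expand_card_pow (f : (ZMod p)[X]) (a : ℕ) : expand (ZMod p) (p ^ a) f = f ^ p ^ a := by
  induction a with
  | zero => simp
  | succ a ih => rw [pow_succ', ← expand_expand, ih, map_pow, expand_card, ← pow_mul, ← pow_succ']

theorem cast_jacobiSym_pow_five (hp2 : p ≠ 2) (a : ℕ) :
    (jacobiSym ((p : ℤ) ^ a) 5 : ZMod p) = ((5 : ZMod p) ^ (p / 2)) ^ a := by
  rw [jacobiSym.pow_left,
    jacobiSym.quadratic_reciprocity_one_mod_four' ((Fact.out : p.Prime).odd_of_ne_two hp2)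
      (by norm_num),
    ← jacobiSym.legendreSym.to_jacobiSym, Int.cast_pow, legendreSym.eq_pow]
  norm_num

theorem cast_jacobiSym_pow_seven (hp2 : p ≠ 2) (a : ℕ) :
    (jacobiSym ((p : ℤ) ^ a) 7 : ZMod p) = ((-7 : ZMod p) ^ (p / 2)) ^ a := by
  have h7 : jacobiSym p 7 = legendreSym p (-7) := by
    rw [jacobiSym.legendreSym.to_jacobiSym,
      jacobiSym.quadratic_reciprocity' ((Fact.out : p.Prime).odd_of_ne_two hp2) (by decide),
      qrSign, χ₄_nat_three_mod_four (by norm_num), show (-7 : ℤ) = -1 * 7 by norm_num,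
      jacobiSym.mul_left]
    norm_num
  rw [jacobiSym.pow_left, h7, Int.cast_pow, legendreSym.eq_pow]
  norm_num

end ZMod

theorem coeff_mul_sub_C_mul_X_pow_self {R : Type*} [CommRing R] (g f : R[X]) (c : R) (N : ℕ) :
    (g * (f - C c * X) ^ N).coeff N =
      ∑ k ∈ Finset.range (N + 1), (-c) ^ (N - k) * N.choose k * (g * f ^ k).coeff k := by
  rw [sub_eq_add_neg, add_pow, Finset.mul_sum, finsetSum_coeff]
  refine Finset.sum_congr rfl fun k hk => ?_
  have hk : k ≤ N := Nat.lt_succ_iff.mp (Finset.mem_range.mp hk)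
  have : g * (f ^ k * (-(C c * X)) ^ (N - k) * (N.choose k : R[X])) =
      C ((-c) ^ (N - k) * N.choose k) * (g * f ^ k) * X ^ (N - k) := by
    rw [← C_eq_natCast, C_mul, C_pow, C_neg]
    ring
  rw [this, coeff_mul_X_pow', if_pos (Nat.sub_le N k), Nat.sub_sub_self hk, coeff_C_mul]

section ZModPrime

variable {p : ℕ} [Fact p.Prime]

theorem sum_inv_pow_mul_coeff_eq_coeff_mul_pow (hp2 : p ≠ 2) {c : ZMod p} (hc : c ≠ 0)
    (g f : (ZMod p)[X]) (a : ℕ) :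
    ∑ k ∈ Finset.range (p ^ a), c⁻¹ ^ k * (g * f ^ k).coeff k =
      (g * (f - C c * X) ^ (p ^ a - 1)).coeff (p ^ a - 1) := by
  have hq : 0 < p ^ a := pow_pos (Fact.out : p.Prime).pos a
  have heven : Even (p ^ a - 1) :=
    Nat.Odd.sub_odd ((Fact.out : p.Prime).odd_of_ne_two hp2).pow odd_one
  rw [coeff_mul_sub_C_mul_X_pow_self, Nat.sub_add_cancel hq]
  refine Finset.sum_congr rfl fun k hk => ?_
  have hk : k < p ^ a := Finset.mem_range.mp hk
  have hck : c ^ (p ^ a - 1 - k) * c ^ k = 1 := by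
    rw [← pow_add, Nat.sub_add_cancel (by omega), ZMod.pow_card_pow_sub_one_eq_one hc]
  rw [ZMod.cast_choose_card_pow_sub_one hk, inv_pow]
  congr 1
  calc (c ^ k)⁻¹ = (-1) ^ (p ^ a - 1 - k + k) * c ^ (p ^ a - 1 - k) := by
        rw [Nat.sub_add_cancel (by omega), heven.neg_one_pow, one_mul]
        exact (eq_inv_of_mul_eq_one_left hck).symm
    _ = (-c) ^ (p ^ a - 1 - k) * (-1) ^ k := by
        rw [neg_pow, pow_add]
        ring

theorem coeff_mul_pow_card_pow_sub_one {F g : (ZMod p)[X]} {φ : PowerSeries (ZMod p)}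
    (hF : F.coeff 0 = 1) (hφ : (F : PowerSeries (ZMod p)) * φ = g) {a n : ℕ} (hn : n < p ^ a) :
    (g * F ^ (p ^ a - 1)).coeff n = PowerSeries.coeff n φ := by
  have hq : 0 < p ^ a := pow_pos (Fact.out : p.Prime).pos a
  obtain ⟨S, hS⟩ : X ^ p ^ a ∣ F ^ p ^ a - 1 := by
    rw [X_pow_dvd_iff, ← ZMod.expand_card_pow]
    intro d hd
    rw [coeff_sub, coeff_expand hq, coeff_one]
    rcases eq_or_ne d 0 with rfl | hd0
    · simp [hF]
    · rw [if_neg fun h => hd0 (Nat.eq_zero_of_dvd_of_lt h hd), if_neg hd0, sub_zero]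
  have hFq : (F : PowerSeries (ZMod p)) ^ p ^ a =
      1 + PowerSeries.X ^ p ^ a * (S : PowerSeries (ZMod p)) := by
    rw [← coe_pow, eq_add_of_sub_eq' hS]
    push_cast
    ring
  have hgF : ((g * F ^ (p ^ a - 1) : (ZMod p)[X]) : PowerSeries (ZMod p)) =
      φ + PowerSeries.X ^ p ^ a * ((S : PowerSeries (ZMod p)) * φ) := by
    rw [coe_mul, coe_pow, ← hφ, mul_comm (F : PowerSeries (ZMod p)), mul_assoc, ← pow_succ',
      Nat.sub_add_cancel hq, hFq]
    ring
  rw [← coeff_coe, hgF, map_add, PowerSeries.coeff_X_pow_mul', if_neg (by omega), add_zero]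

end ZModPrime

def lucasU {R : Type*} [CommRing R] (P Q : R) : ℕ → R
  | 0 => 0
  | 1 => 1
  | n + 2 => P * lucasU P Q (n + 1) - Q * lucasU P Q n

section CommRing

variable {R : Type*} [CommRing R]

namespace lucasU

variable (P Q : R)

@[simp] theorem zero : lucasU P Q 0 = 0 := rfl

@[simp] theorem one : lucasU P Q 1 = 1 := rfl

theorem omega_pow_succ (n : ℕ) :
    (ω : QuadraticAlgebra R (-Q) P) ^ (n + 1) = ⟨-Q * lucasU P Q n, lucasU P Q (n + 1)⟩ := by
  induction n with
  | zero => ext <;> simp [QuadraticAlgebra.omega_re, QuadraticAlgebra.omega_im]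
  | succ n ih =>
    rw [pow_succ', ih, QuadraticAlgebra.omega_mul_mk]
    congr 1
    simp only [lucasU]
    ring

theorem one_sub_C_mul_X_add_C_mul_X_sq_mul_mk :
    (1 - PowerSeries.C P * PowerSeries.X + PowerSeries.C Q * PowerSeries.X ^ 2) *
      PowerSeries.mk (fun n => lucasU P Q (n + 1)) = 1 := by
  ext (_ | _ | n) <;>
    simp [add_mul, sub_mul, pow_two, mul_assoc, PowerSeries.coeff_succ_X_mul, lucasU]

end lucasU

theorem PowerSeries.one_sub_C_mul_X_mul_mk_pow (r : R) :
    (1 - PowerSeries.C r * PowerSeries.X) * PowerSeries.mk (r ^ ·) = 1 := by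
  ext (_ | n) <;> simp [sub_mul, pow_succ', PowerSeries.coeff_succ_X_mul, mul_assoc]

/-- The power series `α / (1 - r x) + (β + γ x) / (1 - P x + Q x²)`. -/
noncomputable def partialFraction (r P Q α β γ : R) : PowerSeries R :=
  PowerSeries.C α * PowerSeries.mk (r ^ ·) +
    (PowerSeries.C β + PowerSeries.C γ * PowerSeries.X) *
      PowerSeries.mk (fun n => lucasU P Q (n + 1))

theorem coe_mul_partialFraction (r P Q α β γ : R) :
    (((1 - C r * X) * (1 - C P * X + C Q * X ^ 2) : R[X]) : PowerSeries R) *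
        partialFraction r P Q α β γ =
      ((C α * (1 - C P * X + C Q * X ^ 2) + (1 - C r * X) * (C β + C γ * X) : R[X]) :
        PowerSeries R) := by
  unfold partialFraction
  push_cast
  linear_combination
    (PowerSeries.C α *
        (1 - PowerSeries.C P * PowerSeries.X + PowerSeries.C Q * PowerSeries.X ^ 2)) *
      PowerSeries.one_sub_C_mul_X_mul_mk_pow r +
    ((1 - PowerSeries.C r * PowerSeries.X) *
        (PowerSeries.C β + PowerSeries.C γ * PowerSeries.X)) *
      lucasU.one_sub_C_mul_X_add_C_mul_X_sq_mul_mk P Q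

theorem coeff_partialFraction (r P Q α β γ : R) (n : ℕ) :
    PowerSeries.coeff n (partialFraction r P Q α β γ) =
      α * r ^ n + β * lucasU P Q (n + 1) + γ * lucasU P Q n := by
  cases n <;> simp [partialFraction, add_mul, mul_assoc, add_assoc, PowerSeries.coeff_succ_X_mul]

theorem ibinom_natCast (n k : ℕ) : ibinom n k = n.choose k := by
  simp [ibinom]

theorem coeff_one_add_X_pow_three_mul (k : ℕ) :
    ((1 + X) ^ (3 * k) : R[X]).coeff k = ibinom (3 * k) k := by
  rw [coeff_one_add_X_pow, ibinom_natCast]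

theorem coeff_one_sub_two_mul_X_mul_one_add_X_pow_three_mul (k : ℕ) :
    ((1 - 2 * X) * (1 + X) ^ (3 * k) : R[X]).coeff k = catalan2 k := by
  rcases k with _ | k
  · simp [catalan2, ibinom]
  · simp [catalan2, ← ibinom_natCast, sub_mul, mul_assoc, coeff_one_add_X_pow]

end CommRing

section ZModPrime

variable {p : ℕ} [Fact p.Prime]

theorem lucasU_card_pow (hp2 : p ≠ 2) (P Q : ZMod p) (a : ℕ) :
    lucasU P Q (p ^ a) = ((P ^ 2 - 4 * Q) ^ (p / 2)) ^ a ∧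
      2 * Q * lucasU P Q (p ^ a - 1) = P * (((P ^ 2 - 4 * Q) ^ (p / 2)) ^ a - 1) := by
  set ℓ := (P ^ 2 - 4 * Q) ^ (p / 2)
  have : CharP (QuadraticAlgebra (ZMod p) (-Q) P) p :=
    charP_of_injective_algebraMap QuadraticAlgebra.algebraMap_injective p
  set t : QuadraticAlgebra (ZMod p) (-Q) P := ⟨-P, 2⟩ with ht_def
  have ht : t ^ p = algebraMap (ZMod p) _ ℓ * t := by
    have ht2 : t ^ 2 = algebraMap (ZMod p) _ (P ^ 2 - 4 * Q) := by
      ext <;> simp [ht_def, pow_two, QuadraticAlgebra.algebraMap_eq] <;> ring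
    have hp : 2 * (p / 2) + 1 = p :=
      Nat.two_mul_div_two_add_one_of_odd ((Fact.out : p.Prime).odd_of_ne_two hp2)
    calc t ^ p = (t ^ 2) ^ (p / 2) * t := by rw [← pow_mul, ← pow_succ, hp]
      _ = algebraMap (ZMod p) _ ℓ * t := by rw [ht2, ← map_pow]
  have htq : t ^ p ^ a = algebraMap (ZMod p) _ (ℓ ^ a) * t := by
    induction a with
    | zero => simp
    | succ a ih =>
      rw [pow_succ, pow_mul, ih, mul_pow, ← map_pow, ZMod.pow_card, ht, pow_succ, map_mul]
      ring
  have key : (2 : QuadraticAlgebra (ZMod p) (-Q) P) * ω ^ p ^ a =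
      algebraMap (ZMod p) _ (ℓ ^ a) * t + algebraMap (ZMod p) _ P := by
    have h2 : (2 : QuadraticAlgebra (ZMod p) (-Q) P) * ω = t + algebraMap (ZMod p) _ P := by
      ext <;> simp [ht_def, QuadraticAlgebra.omega_re, QuadraticAlgebra.omega_im,
        QuadraticAlgebra.algebraMap_eq]
    have h2q : (2 : QuadraticAlgebra (ZMod p) (-Q) P) ^ p ^ a = 2 := by
      rw [← map_ofNat (algebraMap (ZMod p) _) 2, ← map_pow, ZMod.pow_card_pow]
    rw [← h2q, ← mul_pow, h2, add_pow_char_pow, htq, ← map_pow, ZMod.pow_card_pow]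
  obtain ⟨n, hn⟩ : ∃ n, p ^ a = n + 1 :=
    ⟨p ^ a - 1, (Nat.sub_add_cancel (pow_pos (Fact.out : p.Prime).pos a)).symm⟩
  rw [hn, lucasU.omega_pow_succ] at key
  rw [hn, Nat.add_sub_cancel]
  have hre := congrArg QuadraticAlgebra.re key
  have him := congrArg QuadraticAlgebra.im key
  simp [ht_def, QuadraticAlgebra.algebraMap_eq] at hre him
  have h2 : (2 : ZMod p) ≠ 0 := by exact_mod_cast ZMod.natCast_two_pow_ne_zero hp2 1
  exact ⟨mul_left_cancel₀ h2 (him.trans (mul_comm _ _)), by linear_combination -hre⟩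

theorem sum_inv_pow_mul_coeff_eq_lucasU (hp2 : p ≠ 2) {c r P Q α β γ : ZMod p} (hc : c ≠ 0)
    (hF : (1 + X) ^ 3 - C c * X = (1 - C r * X) * (1 - C P * X + C Q * X ^ 2))
    {g : (ZMod p)[X]}
    (hg : g = C α * (1 - C P * X + C Q * X ^ 2) + (1 - C r * X) * (C β + C γ * X)) (a : ℕ) :
    ∑ k ∈ Finset.range (p ^ a), c⁻¹ ^ k * (g * (1 + X) ^ (3 * k)).coeff k =
      α * r ^ (p ^ a - 1) + β * lucasU P Q (p ^ a) + γ * lucasU P Q (p ^ a - 1) := by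
  have hq : 0 < p ^ a := pow_pos (Fact.out : p.Prime).pos a
  simp_rw [pow_mul]
  rw [sum_inv_pow_mul_coeff_eq_coeff_mul_pow hp2 hc, hF, hg,
    coeff_mul_pow_card_pow_sub_one (by simp) (coe_mul_partialFraction r P Q α β γ) (by omega),
    coeff_partialFraction, Nat.sub_add_cancel hq]

-- `(1 + x)³ - 8x = (1 - x)(1 - 4x - x²)`
theorem sum_coeff_mul_inv_eight_pow_eq (hp2 : p ≠ 2) {α β γ : ZMod p} {g : (ZMod p)[X]}
    (hg : 4 * g = C α * (1 - 4 * X - X ^ 2) + (1 - X) * (C β + C γ * X)) (a : ℕ) :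
    ∑ k ∈ Finset.range (p ^ a), (g * (1 + X) ^ (3 * k)).coeff k * ((8 : ZMod p) ^ k)⁻¹ =
      (α + β * ((5 : ZMod p) ^ (p / 2)) ^ a + 2 * γ * (1 - ((5 : ZMod p) ^ (p / 2)) ^ a)) / 4 := by
  have h2 : (2 : ZMod p) ≠ 0 := by exact_mod_cast ZMod.natCast_two_pow_ne_zero hp2 1
  have h4 : (4 : ZMod p) ≠ 0 := by exact_mod_cast ZMod.natCast_two_pow_ne_zero hp2 2
  have h8 : (8 : ZMod p) ≠ 0 := by exact_mod_cast ZMod.natCast_two_pow_ne_zero hp2 3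
  have hu : (4 : (ZMod p)[X]) * C 4⁻¹ = 1 := by
    rw [← map_ofNat C 4, ← C_mul, mul_inv_cancel₀ h4, C_1]
  obtain ⟨hU, hU'⟩ := lucasU_card_pow hp2 4 (-1) a
  rw [show (4 : ZMod p) ^ 2 - 4 * -1 = 5 * 2 ^ 2 by norm_num, ZMod.mul_sq_pow_div_two hp2 _ h2]
    at hU hU'
  have hsum := sum_inv_pow_mul_coeff_eq_lucasU hp2 (r := 1) (P := 4) (Q := -1)
    (α := α * 4⁻¹) (β := β * 4⁻¹) (γ := γ * 4⁻¹) (g := g) h8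
    (by simp only [map_one, map_neg, map_ofNat]; ring)
    (by simp only [map_one, map_neg, map_ofNat, map_mul]
        linear_combination C 4⁻¹ * hg - g * hu) a
  have hV : lucasU 4 (-1) (p ^ a - 1) = 2 * (1 - ((5 : ZMod p) ^ (p / 2)) ^ a) :=
    mul_left_cancel₀ h2 (by linear_combination -hU')
  rw [Finset.sum_congr rfl fun k _ => by rw [mul_comm, ← inv_pow], hsum, one_pow, hU, hV]
  field_simp

-- `4((1 + x)³ + x/4) = (1 + 2x)(4 + 5x + 2x²)`
theorem sum_neg_four_pow_mul_coeff_eq (hp2 : p ≠ 2) {α β γ : ZMod p} {g : (ZMod p)[X]}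
    (hg : 4 * g = C α * (4 + 5 * X + 2 * X ^ 2) + (1 + 2 * X) * (C β + C γ * X)) (a : ℕ) :
    ∑ k ∈ Finset.range (p ^ a), (-4 : ZMod p) ^ k * (g * (1 + X) ^ (3 * k)).coeff k =
      (16 * α + 4 * β * ((-7 : ZMod p) ^ (p / 2)) ^ a +
        5 * γ * (1 - ((-7 : ZMod p) ^ (p / 2)) ^ a)) / 16 := by
  have h2 : (2 : ZMod p) ≠ 0 := by exact_mod_cast ZMod.natCast_two_pow_ne_zero hp2 1
  have h4 : (4 : ZMod p) ≠ 0 := by exact_mod_cast ZMod.natCast_two_pow_ne_zero hp2 2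
  have h16 : (16 : ZMod p) ≠ 0 := by exact_mod_cast ZMod.natCast_two_pow_ne_zero hp2 4
  have h4inv : (4 : ZMod p) * 4⁻¹ = 1 := mul_inv_cancel₀ h4
  have hu : (4 : (ZMod p)[X]) * C 4⁻¹ = 1 := by
    rw [← map_ofNat C 4, ← C_mul, h4inv, C_1]
  obtain ⟨hU, hU'⟩ := lucasU_card_pow hp2 (-5 * 4⁻¹) (2 * 4⁻¹) a
  have hD : (-5 * 4⁻¹ : ZMod p) ^ 2 - 4 * (2 * 4⁻¹) = -7 * 4⁻¹ ^ 2 := by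
    field_simp
    ring
  rw [hD, ZMod.mul_sq_pow_div_two hp2 _ (inv_ne_zero h4)] at hU hU'
  have hsum := sum_inv_pow_mul_coeff_eq_lucasU hp2 (r := -2) (P := -5 * 4⁻¹) (Q := 2 * 4⁻¹)
    (α := α) (β := β * 4⁻¹) (γ := γ * 4⁻¹) (g := g) (neg_ne_zero.mpr (inv_ne_zero h4))
    (by simp only [map_neg, map_mul, map_ofNat]
        linear_combination (-(X + 3 * X ^ 2 + X ^ 3)) * hu)
    (by simp only [map_neg, map_mul, map_ofNat]
        linear_combination C 4⁻¹ * hg - (g - C α) * hu) a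
  have hV : lucasU (-5 * 4⁻¹) (2 * 4⁻¹) (p ^ a - 1) =
      5 * 4⁻¹ * (1 - ((-7 : ZMod p) ^ (p / 2)) ^ a) := by
    linear_combination hU' - lucasU (-5 * 4⁻¹) (2 * 4⁻¹) (p ^ a - 1) * h4inv
  rw [inv_neg, inv_inv, ZMod.pow_card_pow_sub_one_eq_one (neg_ne_zero.mpr h2), hU, hV] at hsum
  rw [hsum]
  field_simp
  ring

theorem sum_Ico_ibinom_mul_inv_eight_pow (hp2 : p ≠ 2) (a : ℕ) :
    ∑ k ∈ Finset.Ico 1 (p ^ a), (ibinom (3 * k) k : ZMod p) * ((8 : ZMod p) ^ k)⁻¹ =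
      3 * 4⁻¹ * (((5 : ZMod p) ^ (p / 2)) ^ a - 1) := by
  have h4 : (4 : ZMod p) ≠ 0 := by exact_mod_cast ZMod.natCast_two_pow_ne_zero hp2 2
  have h := sum_coeff_mul_inv_eight_pow_eq hp2 (α := -1) (β := 5) (γ := 1) (g := 1)
    (by simp only [map_neg, map_one, map_ofNat]; ring) a
  simp only [one_mul, coeff_one_add_X_pow_three_mul] at h
  rw [Finset.sum_Ico_eq_sub _ (Nat.one_le_pow _ _ (Fact.out : p.Prime).pos),
    Finset.sum_range_one, h]
  simp [ibinom]
  field_simp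
  ring

theorem sum_Ico_catalan2_mul_inv_eight_pow (hp2 : p ≠ 2) (a : ℕ) :
    ∑ k ∈ Finset.Ico 1 (p ^ a), (catalan2 k : ZMod p) * ((8 : ZMod p) ^ k)⁻¹ =
      5 * 4⁻¹ * (((5 : ZMod p) ^ (p / 2)) ^ a - 1) := by
  have h4 : (4 : ZMod p) ≠ 0 := by exact_mod_cast ZMod.natCast_two_pow_ne_zero hp2 2
  have h := sum_coeff_mul_inv_eight_pow_eq hp2 (α := 1) (β := 3) (γ := -1) (g := 1 - 2 * X)
    (by simp only [map_neg, map_one, map_ofNat]; ring) a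
  simp only [coeff_one_sub_two_mul_X_mul_one_add_X_pow_three_mul] at h
  rw [Finset.sum_Ico_eq_sub _ (Nat.one_le_pow _ _ (Fact.out : p.Prime).pos),
    Finset.sum_range_one, h]
  simp [catalan2, ibinom]
  field_simp
  ring

theorem sum_Ico_neg_four_pow_mul_ibinom (hp2 : p ≠ 2) (a : ℕ) :
    ∑ k ∈ Finset.Ico 1 (p ^ a), (-4 : ZMod p) ^ k * (ibinom (3 * k) k : ZMod p) =
      3 * 8⁻¹ * (1 - ((-7 : ZMod p) ^ (p / 2)) ^ a) := by
  have h8 : (8 : ZMod p) ≠ 0 := by exact_mod_cast ZMod.natCast_two_pow_ne_zero hp2 3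
  have h16 : (16 : ZMod p) ≠ 0 := by exact_mod_cast ZMod.natCast_two_pow_ne_zero hp2 4
  have h := sum_neg_four_pow_mul_coeff_eq hp2 (α := 2) (β := -4) (γ := -2) (g := 1)
    (by simp only [map_neg, map_ofNat]; ring) a
  simp only [one_mul, coeff_one_add_X_pow_three_mul] at h
  rw [Finset.sum_Ico_eq_sub _ (Nat.one_le_pow _ _ (Fact.out : p.Prime).pos),
    Finset.sum_range_one, h]
  simp [ibinom]
  field_simp
  ring

theorem sum_Ico_neg_four_pow_mul_catalan2 (hp2 : p ≠ 2) (a : ℕ) :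
    ∑ k ∈ Finset.Ico 1 (p ^ a), (-4 : ZMod p) ^ k * (catalan2 k : ZMod p) =
      7 * 4⁻¹ * (1 - ((-7 : ZMod p) ^ (p / 2)) ^ a) := by
  have h4 : (4 : ZMod p) ≠ 0 := by exact_mod_cast ZMod.natCast_two_pow_ne_zero hp2 2
  have h16 : (16 : ZMod p) ≠ 0 := by exact_mod_cast ZMod.natCast_two_pow_ne_zero hp2 4
  have h := sum_neg_four_pow_mul_coeff_eq hp2 (α := 4) (β := -12) (γ := -4) (g := 1 - 2 * X)
    (by simp only [map_neg, map_ofNat]; ring) a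
  simp only [coeff_one_sub_two_mul_X_mul_one_add_X_pow_three_mul] at h
  rw [Finset.sum_Ico_eq_sub _ (Nat.one_le_pow _ _ (Fact.out : p.Prime).pos),
    Finset.sum_range_one, h]
  simp [catalan2, ibinom]
  field_simp
  ring

end ZModPrime

theorem stmt_1_general (p : ℕ) (hp : p.Prime) (hp2 : p ≠ 2) (a : ℕ) :
    (∑ k ∈ Finset.Ico 1 (p ^ a),
        (ibinom (3 * k) (k : ℤ) : ZMod p) * ((8 : ZMod p) ^ k)⁻¹) =
      3 * (4 : ZMod p)⁻¹ * ((jacobiSym (p ^ a) 5 : ZMod p) - 1) ∧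
    (∑ k ∈ Finset.Ico 1 (p ^ a),
        (catalan2 k : ZMod p) * ((8 : ZMod p) ^ k)⁻¹) =
      5 * (4 : ZMod p)⁻¹ * ((jacobiSym (p ^ a) 5 : ZMod p) - 1) ∧
    (∑ k ∈ Finset.Ico 1 (p ^ a),
        (-4 : ZMod p) ^ k * (ibinom (3 * k) (k : ℤ) : ZMod p)) =
      3 * (8 : ZMod p)⁻¹ * (1 - (jacobiSym (p ^ a) 7 : ZMod p)) ∧
    (∑ k ∈ Finset.Ico 1 (p ^ a),
        (-4 : ZMod p) ^ k * (catalan2 k : ZMod p)) =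
      7 * (4 : ZMod p)⁻¹ * (1 - (jacobiSym (p ^ a) 7 : ZMod p)) := by
  have := Fact.mk hp
  rw [ZMod.cast_jacobiSym_pow_five hp2, ZMod.cast_jacobiSym_pow_seven hp2]
  exact ⟨sum_Ico_ibinom_mul_inv_eight_pow hp2 a, sum_Ico_catalan2_mul_inv_eight_pow hp2 a,
    sum_Ico_neg_four_pow_mul_ibinom hp2 a, sum_Ico_neg_four_pow_mul_catalan2 hp2 a⟩

theorem stmt_1 (p : ℕ) (hp : p.Prime) (hp2 : p ≠ 2) (a : ℕ) (ha : 0 < a) :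
    (∑ k ∈ Finset.Ico 1 (p ^ a),
        (ibinom (3 * k) (k : ℤ) : ZMod p) * ((8 : ZMod p) ^ k)⁻¹) =
      3 * (4 : ZMod p)⁻¹ * ((jacobiSym (p ^ a) 5 : ZMod p) - 1) ∧
    (∑ k ∈ Finset.Ico 1 (p ^ a),
        (catalan2 k : ZMod p) * ((8 : ZMod p) ^ k)⁻¹) =
      5 * (4 : ZMod p)⁻¹ * ((jacobiSym (p ^ a) 5 : ZMod p) - 1) ∧
    (∑ k ∈ Finset.Ico 1 (p ^ a),
        (-4 : ZMod p) ^ k * (ibinom (3 * k) (k : ℤ) : ZMod p)) =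
      3 * (8 : ZMod p)⁻¹ * (1 - (jacobiSym (p ^ a) 7 : ZMod p)) ∧
    (∑ k ∈ Finset.Ico 1 (p ^ a),
        (-4 : ZMod p) ^ k * (catalan2 k : ZMod p)) =
      7 * (4 : ZMod p)⁻¹ * (1 - (jacobiSym (p ^ a) 7 : ZMod p)) :=
  stmt_1_general p hp hp2 a
end

section
/- Let p be a prime with p ≠ 7 and let a be a positive integer. Then in ℤ/pℤ: (1) ∑_{k=1}^{p^a−1} binom(3k, k)·(7^k)⁻¹ equals −3 if p^a ≡ ±2 (mod 7) and equals 0 otherwise; (2) ∑_{k=0}^{p^a−1} binom(3k, k−1)·(7^k)⁻¹ equals 0 if p^a ≡ ±1 (mod 7), equals −1 if p^a ≡ ±2 (mod 7), and equals 1 if p^a ≡ ±3 (mod 7); (3) ∑_{k=0}^{p^a−1} binom(3k, k+1)·(7^k)⁻¹ equals 0 if p^a ≡ ±1 (mod 7), equals −7 if p^a ≡ ±2 (mod 7), and equals −1 if p^a ≡ ±3 (mod 7); (4) ∑_{k=0}^{p^a−1} C_k^{(2)}·(7^k)⁻¹ equals 1 if p^a ≡ ±1 (mod 7), equals 0 if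 p^a ≡ ±2 (mod 7), and equals −1 if p^a ≡ ±3 (mod 7); (5) ∑_{k=1}^{p^a−1} \bar{C}_k^{(2)}·(7^k)⁻¹ equals 1 if p^a ≢ ±1 (mod 7) and equals 0 otherwise. -/
/-- Second-kind second-order Catalan numbers
`\bar C_k^{(2)} = 2·binom(3k,k) - binom(3k,k+1)`. -/
def catalan2bar (k : ℕ) : ℤ :=
  2 * (ibinom (3 * k) (k : ℤ) : ℤ) - (ibinom (3 * k) ((k : ℤ) + 1) : ℤ)

def cubicRec : ℕ → ℤ
  | 0 => 1
  | 1 => 4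
  | 2 => 13
  | n + 3 => 4 * cubicRec (n + 2) - 3 * cubicRec (n + 1) - cubicRec n

section Binet

variable {R : Type*} [CommRing R] {t₁ t₂ t₃ : R}
  (he₁ : t₁ + t₂ + t₃ = 4) (he₂ : t₁ * t₂ + t₁ * t₃ + t₂ * t₃ = 3) (he₃ : t₁ * t₂ * t₃ = -1)
include he₁ he₂ he₃

theorem vandermonde_mul_cubicRec (n : ℕ) :
    (t₁ - t₂) * (t₁ - t₃) * (t₃ - t₂) * cubicRec n =
      t₁ ^ (n + 2) * (t₃ - t₂) + t₂ ^ (n + 2) * (t₁ - t₃) + t₃ ^ (n + 2) * (t₂ - t₁) := by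
  have h₁ : t₁ ^ 3 = 4 * t₁ ^ 2 - 3 * t₁ - 1 := by linear_combination t₁ ^ 2 * he₁ - t₁ * he₂ + he₃
  have h₂ : t₂ ^ 3 = 4 * t₂ ^ 2 - 3 * t₂ - 1 := by linear_combination t₂ ^ 2 * he₁ - t₂ * he₂ + he₃
  have h₃ : t₃ ^ 3 = 4 * t₃ ^ 2 - 3 * t₃ - 1 := by linear_combination t₃ ^ 2 * he₁ - t₃ * he₂ + he₃
  set V := (t₁ - t₂) * (t₁ - t₃) * (t₃ - t₂)
  induction n using cubicRec.induct with
  | case1 => simp only [cubicRec, V]; push_cast; ring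
  | case2 => simp only [cubicRec, V]; push_cast; linear_combination -V * he₁
  | case3 =>
    simp only [cubicRec, V]; push_cast
    linear_combination -V * (t₁ + t₂ + t₃ + 4) * he₁ + V * he₂
  | case4 n ih₂ ih₁ ih₀ =>
    show V * cubicRec (n + 3) =
      t₁ ^ (n + 5) * (t₃ - t₂) + t₂ ^ (n + 5) * (t₁ - t₃) + t₃ ^ (n + 5) * (t₂ - t₁)
    simp only [cubicRec]; push_cast
    linear_combination 4 * ih₂ - 3 * ih₁ - ih₀ - t₁ ^ (n + 2) * (t₃ - t₂) * h₁
      - t₂ ^ (n + 2) * (t₁ - t₃) * h₂ - t₃ ^ (n + 2) * (t₂ - t₁) * h₃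

theorem vandermonde_mul_cubicRec_of_pow_eq {P : ℕ} (hP : 2 ≤ P) {u₁ u₂ u₃ : R}
    (hu₁ : t₁ ^ P = u₁) (hu₂ : t₂ ^ P = u₂) (hu₃ : t₃ ^ P = u₃) :
    (t₁ - t₂) * (t₁ - t₃) * (t₃ - t₂) * cubicRec (P - 2) =
        u₁ * (t₃ - t₂) + u₂ * (t₁ - t₃) + u₃ * (t₂ - t₁) ∧
      (t₁ - t₂) * (t₁ - t₃) * (t₃ - t₂) * cubicRec (P - 1) =
        u₁ * t₁ * (t₃ - t₂) + u₂ * t₂ * (t₁ - t₃) + u₃ * t₃ * (t₂ - t₁) ∧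
      (t₁ - t₂) * (t₁ - t₃) * (t₃ - t₂) * cubicRec P =
        u₁ * t₁ ^ 2 * (t₃ - t₂) + u₂ * t₂ ^ 2 * (t₁ - t₃) + u₃ * t₃ ^ 2 * (t₂ - t₁) := by
  refine ⟨?_, ?_, ?_⟩ <;> rw [vandermonde_mul_cubicRec he₁ he₂ he₃]
  · rw [Nat.sub_add_cancel hP, hu₁, hu₂, hu₃]
  · rw [show P - 1 + 2 = P + 1 by omega, pow_succ, pow_succ, pow_succ, hu₁, hu₂, hu₃]
  · rw [pow_add, pow_add, pow_add, hu₁, hu₂, hu₃]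

end Binet

section HeptagonCubic

-- `c` stands for `ζ + ζ⁻¹`, so that `1 - c`, `3 - c ^ 2`, `c ^ 2 + c` are `t₁, t₂, t₃`.
variable {R : Type*} [CommRing R] {c : R} (hc : c ^ 3 + c ^ 2 - 2 * c - 1 = 0)
include hc

theorem heptagon_vieta :
    (1 - c) + (3 - c ^ 2) + (c ^ 2 + c) = 4 ∧
      (1 - c) * (3 - c ^ 2) + (1 - c) * (c ^ 2 + c) + (3 - c ^ 2) * (c ^ 2 + c) = 3 ∧
      (1 - c) * (3 - c ^ 2) * (c ^ 2 + c) = -1 :=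
  ⟨by ring, by linear_combination -c * hc, by linear_combination (c ^ 2 - c - 1) * hc⟩

theorem heptagon_vandermonde :
    ((1 - c) - (3 - c ^ 2)) * ((1 - c) - (c ^ 2 + c)) * ((c ^ 2 + c) - (3 - c ^ 2)) = 7 := by
  linear_combination (-2 * c ^ 3 - c ^ 2 + 9 * c + 1) * hc

end HeptagonCubic

section SeventhRoots

variable {R : Type*} [CommRing R]

-- `1 - z ^ j - z ^ (-j)` for a seventh root of unity `z`, written without inverses.
def heptRoot (z : R) (j : ℕ) : R := 1 - z ^ j - z ^ (6 * j)

theorem heptRoot_eq_of_mod {z : R} (hz : z ^ 7 = 1) {m n : ℕ}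
    (h : m % 7 = n % 7 ∨ (m + n) % 7 = 0) : heptRoot z m = heptRoot z n := by
  unfold heptRoot
  rw [pow_eq_pow_mod m hz, pow_eq_pow_mod (6 * m) hz, pow_eq_pow_mod n hz,
    pow_eq_pow_mod (6 * n) hz]
  rcases h with h | h
  · rw [h, show 6 * m % 7 = 6 * n % 7 by omega]
  · rw [show m % 7 = 6 * n % 7 by omega, show 6 * m % 7 = n % 7 by omega]; ring

theorem heptRoot_pow_char {p : ℕ} [Fact p.Prime] [CharP R p] (z : R) (j a : ℕ) :
    heptRoot z j ^ p ^ a = heptRoot z (j * p ^ a) := by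
  unfold heptRoot
  rw [sub_pow_char_pow, sub_pow_char_pow, one_pow, ← pow_mul, ← pow_mul, mul_assoc]

theorem heptRoot_one (z : R) : heptRoot z 1 = 1 - (z + z ^ 6) := by
  simp only [heptRoot]; ring

variable {z : R} (hz : z ^ 6 + z ^ 5 + z ^ 4 + z ^ 3 + z ^ 2 + z + 1 = 0)
include hz

theorem pow_seven_eq_one_of_cyclotomic : z ^ 7 = 1 := by linear_combination (z - 1) * hz

theorem heptRoot_two : heptRoot z 2 = 3 - (z + z ^ 6) ^ 2 := by
  simp only [heptRoot]; linear_combination (2 * z - 2) * hz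

theorem heptRoot_three : heptRoot z 3 = (z + z ^ 6) ^ 2 + (z + z ^ 6) := by
  simp only [heptRoot]
  linear_combination (1 - 2 * z + z ^ 4 - z ^ 6 + z ^ 11 - z ^ 12) * hz

theorem cubic_of_cyclotomic :
    (z + z ^ 6) ^ 3 + (z + z ^ 6) ^ 2 - 2 * (z + z ^ 6) - 1 = 0 := by
  linear_combination (-1 - z + 3 * z ^ 2 - z ^ 4 - 2 * z ^ 6 + 3 * z ^ 7 - z ^ 11 + z ^ 12) * hz

end SeventhRoots

section Frobenius

variable {K : Type*} [Field K] {z : K} (hz : z ^ 6 + z ^ 5 + z ^ 4 + z ^ 3 + z ^ 2 + z + 1 = 0)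
  (h7 : (7 : K) ≠ 0) {P : ℕ} (hP : 2 ≤ P)
include hz h7 hP

theorem cubicRec_of_heptRoot_pow_fix (h₁ : heptRoot z 1 ^ P = heptRoot z 1)
    (h₂ : heptRoot z 2 ^ P = heptRoot z 2) (h₃ : heptRoot z 3 ^ P = heptRoot z 3) :
    (cubicRec (P - 2) : K) = 0 ∧ (cubicRec (P - 1) : K) = 1 ∧ (cubicRec P : K) = 4 := by
  have hc := cubic_of_cyclotomic hz
  simp only [heptRoot_one, heptRoot_two hz, heptRoot_three hz] at h₁ h₂ h₃
  obtain ⟨e₁, e₂, e₃⟩ := heptagon_vieta hc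
  obtain ⟨g₀, g₁, g₂⟩ := vandermonde_mul_cubicRec_of_pow_eq e₁ e₂ e₃ hP h₁ h₂ h₃
  rw [heptagon_vandermonde hc] at g₀ g₁ g₂
  set c := z + z ^ 6
  refine ⟨mul_left_cancel₀ h7 ?_, mul_left_cancel₀ h7 ?_, mul_left_cancel₀ h7 ?_⟩
  · linear_combination g₀
  · linear_combination g₁ + (1 + 9 * c - c ^ 2 - 2 * c ^ 3) * hc
  · linear_combination g₂ + (4 + 36 * c - 4 * c ^ 2 - 8 * c ^ 3) * hc

theorem cubicRec_of_heptRoot_pow_rotate (h₁ : heptRoot z 1 ^ P = heptRoot z 2)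
    (h₂ : heptRoot z 2 ^ P = heptRoot z 3) (h₃ : heptRoot z 3 ^ P = heptRoot z 1) :
    (cubicRec (P - 2) : K) = -1 ∧ (cubicRec (P - 1) : K) = -2 ∧ (cubicRec P : K) = -3 := by
  have hc := cubic_of_cyclotomic hz
  simp only [heptRoot_one, heptRoot_two hz, heptRoot_three hz] at h₁ h₂ h₃
  obtain ⟨e₁, e₂, e₃⟩ := heptagon_vieta hc
  obtain ⟨g₀, g₁, g₂⟩ := vandermonde_mul_cubicRec_of_pow_eq e₁ e₂ e₃ hP h₁ h₂ h₃
  rw [heptagon_vandermonde hc] at g₀ g₁ g₂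
  set c := z + z ^ 6
  refine ⟨mul_left_cancel₀ h7 ?_, mul_left_cancel₀ h7 ?_, mul_left_cancel₀ h7 ?_⟩
  · linear_combination g₀ - 3 * c * hc
  · linear_combination g₁ + (-5 - 7 * c + 5 * c ^ 2 + c ^ 3) * hc
  · linear_combination g₂ + (-12 - 6 * c + 13 * c ^ 2 + 2 * c ^ 3 - c ^ 4 - c ^ 5) * hc

theorem cubicRec_of_heptRoot_pow_rotate_inv (h₁ : heptRoot z 1 ^ P = heptRoot z 3)
    (h₂ : heptRoot z 2 ^ P = heptRoot z 1) (h₃ : heptRoot z 3 ^ P = heptRoot z 2) :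
    (cubicRec (P - 2) : K) = 1 ∧ (cubicRec (P - 1) : K) = 1 ∧ (cubicRec P : K) = 3 := by
  have hc := cubic_of_cyclotomic hz
  simp only [heptRoot_one, heptRoot_two hz, heptRoot_three hz] at h₁ h₂ h₃
  obtain ⟨e₁, e₂, e₃⟩ := heptagon_vieta hc
  obtain ⟨g₀, g₁, g₂⟩ := vandermonde_mul_cubicRec_of_pow_eq e₁ e₂ e₃ hP h₁ h₂ h₃
  rw [heptagon_vandermonde hc] at g₀ g₁ g₂
  set c := z + z ^ 6
  refine ⟨mul_left_cancel₀ h7 ?_, mul_left_cancel₀ h7 ?_, mul_left_cancel₀ h7 ?_⟩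
  · linear_combination g₀ + 3 * c * hc
  · linear_combination g₁ + (4 - 2 * c - 4 * c ^ 2 + c ^ 3) * hc
  · linear_combination g₂ + (12 + 6 * c - 13 * c ^ 2 - 2 * c ^ 3 + c ^ 4 + c ^ 5) * hc

end Frobenius

open Polynomial in
theorem exists_cyclotomic_seven_root (K : Type*) [Field K] [IsAlgClosed K] :
    ∃ z : K, z ^ 6 + z ^ 5 + z ^ 4 + z ^ 3 + z ^ 2 + z + 1 = 0 := by
  have hdeg : (X ^ 6 + X ^ 5 + X ^ 4 + X ^ 3 + X ^ 2 + X + 1 : K[X]).degree = 6 := by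
    compute_degree!
  obtain ⟨z, hz⟩ := IsAlgClosed.exists_root _ (by rw [hdeg]; decide)
  exact ⟨z, by simpa using hz⟩

theorem seven_ne_zero_zmod {p : ℕ} (hp : p.Prime) (hp7 : p ≠ 7) : (7 : ZMod p) ≠ 0 := by
  have h := (ZMod.natCast_eq_zero_iff 7 p).not.mpr
    (fun hd ↦ hp7 ((Nat.prime_dvd_prime_iff_eq hp (by norm_num)).mp hd))
  exact_mod_cast h

theorem cubicRec_prime_pow_mod {p : ℕ} (hp : p.Prime) (hp7 : p ≠ 7) {a : ℕ} (ha : 0 < a) :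
    (p ^ a % 7 = 1 ∨ p ^ a % 7 = 6 → (cubicRec (p ^ a - 2) : ZMod p) = 0 ∧
      (cubicRec (p ^ a - 1) : ZMod p) = 1 ∧ (cubicRec (p ^ a) : ZMod p) = 4) ∧
    (p ^ a % 7 = 2 ∨ p ^ a % 7 = 5 → (cubicRec (p ^ a - 2) : ZMod p) = -1 ∧
      (cubicRec (p ^ a - 1) : ZMod p) = -2 ∧ (cubicRec (p ^ a) : ZMod p) = -3) ∧
    (p ^ a % 7 = 3 ∨ p ^ a % 7 = 4 → (cubicRec (p ^ a - 2) : ZMod p) = 1 ∧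
      (cubicRec (p ^ a - 1) : ZMod p) = 1 ∧ (cubicRec (p ^ a) : ZMod p) = 3) := by
  have : Fact p.Prime := ⟨hp⟩
  let K := AlgebraicClosure (ZMod p)
  obtain ⟨z, hz⟩ := exists_cyclotomic_seven_root K
  have hP : 2 ≤ p ^ a := hp.two_le.trans (Nat.le_self_pow ha.ne' p)
  have h7 : (7 : K) ≠ 0 := by
    rw [← map_ofNat (algebraMap (ZMod p) K)]
    exact (map_ne_zero _).mpr (seven_ne_zero_zmod hp hp7)
  have frob (j s : ℕ) (h : j * p ^ a % 7 = s % 7 ∨ (j * p ^ a + s) % 7 = 0) :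
      heptRoot z j ^ p ^ a = heptRoot z s :=
    (heptRoot_pow_char z j a).trans (heptRoot_eq_of_mod (pow_seven_eq_one_of_cyclotomic hz) h)
  have transfer (n : ℕ) (v : ZMod p) (h : (cubicRec n : K) = algebraMap (ZMod p) K v) :
      (cubicRec n : ZMod p) = v :=
    (algebraMap (ZMod p) K).injective (by rwa [map_intCast])
  refine ⟨fun h ↦ ?_, fun h ↦ ?_, fun h ↦ ?_⟩ <;>
    [have g := cubicRec_of_heptRoot_pow_fix hz h7 hP
      (frob 1 1 (by omega)) (frob 2 2 (by omega)) (frob 3 3 (by omega));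
    have g := cubicRec_of_heptRoot_pow_rotate hz h7 hP
      (frob 1 2 (by omega)) (frob 2 3 (by omega)) (frob 3 1 (by omega));
    have g := cubicRec_of_heptRoot_pow_rotate_inv hz h7 hP
      (frob 1 3 (by omega)) (frob 2 1 (by omega)) (frob 3 2 (by omega))] <;>
    exact ⟨transfer _ _ (by simpa [map_ofNat] using g.1),
      transfer _ _ (by simpa [map_ofNat] using g.2.1),
      transfer _ _ (by simpa [map_ofNat] using g.2.2)⟩

section Series

open PowerSeries

def cubicRecSeries (R : Type*) [CommRing R] : PowerSeries R :=
  PowerSeries.mk fun n ↦ (cubicRec n : R)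

theorem cubicRecSeries_mul (R : Type*) [CommRing R] :
    cubicRecSeries R * (1 - 4 * X + 3 * X ^ 2 + X ^ 3) = 1 := by
  ext n
  rw [show cubicRecSeries R * (1 - 4 * X + 3 * X ^ 2 + X ^ 3) = cubicRecSeries R -
      4 • (cubicRecSeries R * X ^ 1) + 3 • (cubicRecSeries R * X ^ 2) + cubicRecSeries R * X ^ 3 by
    ring]
  simp only [map_add, map_sub, map_nsmul, coeff_mul_X_pow', coeff_one, cubicRecSeries, coeff_mk]
  rcases n with _ | _ | _ | n
  · simp [cubicRec]
  · norm_num [cubicRec]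
  · norm_num [cubicRec]
  · simp only [cubicRec, le_add_iff_nonneg_left, zero_le, if_true, add_tsub_cancel_right,
      show n + 1 + 1 + 1 - 2 = n + 1 by omega, show n + 1 + 1 + 1 - 3 = n by omega,
      if_neg (show n + 1 + 1 + 1 ≠ 0 by omega), nsmul_eq_mul]
    push_cast
    ring

end Series

section CubeGeomSum

open Polynomial

theorem coeff_one_add_X_pow_mul_X_pow {R : Type*} [Semiring R] (n d m : ℕ) :
    ((1 + X : R[X]) ^ n * X ^ d).coeff m = (ibinom n ((m : ℤ) - d) : R) := by
  rw [coeff_mul_X_pow', ibinom]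
  split_ifs with h h'
  · rw [coeff_one_add_X_pow, show (m : ℤ) - d = ((m - d : ℕ) : ℤ) by omega, Int.toNat_natCast]
  · omega
  · omega
  · simp

noncomputable def cubeGeomSum (p n : ℕ) : (ZMod p)[X] :=
  ∑ k ∈ Finset.range n, ((1 + X) ^ 3) ^ k * (C 7 * X) ^ (n - 1 - k)

theorem cubeGeomSum_mul {p : ℕ} [Fact p.Prime] (a : ℕ) :
    cubeGeomSum p (p ^ a) * (1 - 4 * X + 3 * X ^ 2 + X ^ 3) =
      1 - 4 * X ^ p ^ a + 3 * (X ^ p ^ a) ^ 2 + (X ^ p ^ a) ^ 3 := by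
  have hF : (1 - 4 * X + 3 * X ^ 2 + X ^ 3 : (ZMod p)[X]) = (1 + X) ^ 3 - C 7 * X := by
    rw [map_ofNat]; ring
  rw [cubeGeomSum, hF, geom_sum₂_mul, ← pow_mul, mul_comm 3, pow_mul, add_pow_char_pow, one_pow,
    mul_pow, ← map_pow, ZMod.pow_card_pow, map_ofNat]
  ring

theorem coeff_cubeGeomSum {p : ℕ} [Fact p.Prime] {a m : ℕ} (hm : m ≤ p ^ a) :
    (cubeGeomSum p (p ^ a)).coeff m = (cubicRec m : ZMod p) - if m = p ^ a then 4 else 0 := by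
  have hS := congrArg (coeToPowerSeries.ringHom (R := ZMod p)) (cubeGeomSum_mul (p := p) a)
  simp only [map_mul, map_add, map_sub, map_pow, map_one, map_ofNat, coeToPowerSeries.ringHom_apply,
    coe_X] at hS
  set G := cubicRecSeries (ZMod p)
  set Y : PowerSeries (ZMod p) := PowerSeries.X ^ p ^ a
  have hS' : (cubeGeomSum p (p ^ a) : PowerSeries (ZMod p)) =
      G - 4 • (Y * G) + 3 • (Y ^ 2 * G) + Y ^ 3 * G := by
    rw [← mul_one (cubeGeomSum p (p ^ a) : PowerSeries (ZMod p)), ← cubicRecSeries_mul,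
      mul_comm G, ← mul_assoc, hS]
    ring
  rw [← coeff_coe, hS']
  simp only [Y, ← pow_mul, map_add, map_sub, map_nsmul, PowerSeries.coeff_X_pow_mul', G,
    cubicRecSeries, PowerSeries.coeff_mk]
  have hP : 0 < p ^ a := pow_pos (Fact.out : p.Prime).pos a
  rw [if_neg (by omega : ¬ p ^ a * 2 ≤ m), if_neg (by omega : ¬ p ^ a * 3 ≤ m)]
  rcases hm.lt_or_eq with h | rfl
  · simp [h.ne, not_le.mpr h]
  · simp [cubicRec]

theorem seven_pow_sub_one {p : ℕ} [Fact p.Prime] (h7 : (7 : ZMod p) ≠ 0) (a : ℕ) :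
    (7 : ZMod p) ^ (p ^ a - 1) = 1 := by
  refine mul_right_cancel₀ h7 ?_
  rw [← pow_succ, Nat.sub_add_cancel (pow_pos (Fact.out : p.Prime).pos a), ZMod.pow_card_pow,
    one_mul]

theorem sum_ibinom_mul_inv_seven_pow {p : ℕ} [Fact p.Prime] (h7 : (7 : ZMod p) ≠ 0) (a : ℕ)
    (i : ℤ) {m : ℕ} (hm : (m : ℤ) = ((p ^ a : ℕ) : ℤ) - 1 + i) (hmP : m ≤ p ^ a) :
    ∑ k ∈ Finset.range (p ^ a), (ibinom (3 * k) (k + i) : ZMod p) * ((7 : ZMod p) ^ k)⁻¹ =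
      (cubicRec m : ZMod p) - if m = p ^ a then 4 else 0 := by
  rw [← coeff_cubeGeomSum hmP, cubeGeomSum, finsetSum_coeff]
  refine Finset.sum_congr rfl fun k hk ↦ ?_
  have hk := Finset.mem_range.mp hk
  rw [← pow_mul, mul_pow, ← map_pow, ← mul_assoc, mul_right_comm, coeff_mul_C,
    coeff_one_add_X_pow_mul_X_pow, show (m : ℤ) - (p ^ a - 1 - k : ℕ) = k + i by omega]
  congr 1
  refine inv_eq_of_mul_eq_one_left ?_
  rw [← pow_add, show p ^ a - 1 - k + k = p ^ a - 1 by omega, seven_pow_sub_one h7]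

end CubeGeomSum

theorem sum_catalan2_mul {R : Type*} [CommRing R] (s : Finset ℕ) (w : ℕ → R) :
    ∑ k ∈ s, (catalan2 k : R) * w k = ∑ k ∈ s, (ibinom (3 * k) k : R) * w k -
      2 * ∑ k ∈ s, (ibinom (3 * k) ((k : ℤ) - 1) : R) * w k := by
  rw [Finset.mul_sum, ← Finset.sum_sub_distrib]
  refine Finset.sum_congr rfl fun k _ ↦ ?_
  simp only [catalan2]; push_cast; ring

theorem sum_catalan2bar_mul {R : Type*} [CommRing R] (s : Finset ℕ) (w : ℕ → R) :
    ∑ k ∈ s, (catalan2bar k : R) * w k = 2 * ∑ k ∈ s, (ibinom (3 * k) k : R) * w k -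
      ∑ k ∈ s, (ibinom (3 * k) ((k : ℤ) + 1) : R) * w k := by
  rw [Finset.mul_sum, ← Finset.sum_sub_distrib]
  refine Finset.sum_congr rfl fun k _ ↦ ?_
  simp only [catalan2bar]; push_cast; ring

theorem prime_pow_mod_seven_ne_zero {p : ℕ} (hp : p.Prime) (hp7 : p ≠ 7) (a : ℕ) :
    p ^ a % 7 ≠ 0 := fun h ↦ hp7 ((Nat.prime_dvd_prime_iff_eq (by norm_num) hp).mp
  ((by norm_num : Nat.Prime 7).dvd_of_dvd_pow (Nat.dvd_of_mod_eq_zero h))).symm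

theorem sums_eq_cubicRec {p : ℕ} (hp : p.Prime) (hp7 : p ≠ 7) {a : ℕ} (ha : 0 < a) :
    ∑ k ∈ Finset.Ico 1 (p ^ a), (ibinom (3 * k) k : ZMod p) * ((7 : ZMod p) ^ k)⁻¹ =
      cubicRec (p ^ a - 1) - 1 ∧
    ∑ k ∈ Finset.range (p ^ a), (ibinom (3 * k) ((k : ℤ) - 1) : ZMod p) * ((7 : ZMod p) ^ k)⁻¹ =
      cubicRec (p ^ a - 2) ∧
    ∑ k ∈ Finset.range (p ^ a), (ibinom (3 * k) ((k : ℤ) + 1) : ZMod p) * ((7 : ZMod p) ^ k)⁻¹ =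
      cubicRec (p ^ a) - 4 ∧
    ∑ k ∈ Finset.range (p ^ a), (catalan2 k : ZMod p) * ((7 : ZMod p) ^ k)⁻¹ =
      cubicRec (p ^ a - 1) - 2 * cubicRec (p ^ a - 2) ∧
    ∑ k ∈ Finset.Ico 1 (p ^ a), (catalan2bar k : ZMod p) * ((7 : ZMod p) ^ k)⁻¹ =
      2 * cubicRec (p ^ a - 1) - cubicRec (p ^ a) + 2 := by
  have : Fact p.Prime := ⟨hp⟩
  have h7 := seven_ne_zero_zmod hp hp7
  have hP : 2 ≤ p ^ a := hp.two_le.trans (Nat.le_self_pow ha.ne' p)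
  have sum₀ : ∑ k ∈ Finset.range (p ^ a), (ibinom (3 * k) k : ZMod p) * ((7 : ZMod p) ^ k)⁻¹ =
      cubicRec (p ^ a - 1) := by
    simpa [show p ^ a - 1 ≠ p ^ a by omega] using
      sum_ibinom_mul_inv_seven_pow h7 a 0 (m := p ^ a - 1) (by omega) (by omega)
  have sumPred : ∑ k ∈ Finset.range (p ^ a),
      (ibinom (3 * k) ((k : ℤ) - 1) : ZMod p) * ((7 : ZMod p) ^ k)⁻¹ = cubicRec (p ^ a - 2) := by
    simpa [show p ^ a - 2 ≠ p ^ a by omega, ← sub_eq_add_neg] using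
      sum_ibinom_mul_inv_seven_pow h7 a (-1) (m := p ^ a - 2) (by omega) (by omega)
  have sumSucc : ∑ k ∈ Finset.range (p ^ a),
      (ibinom (3 * k) ((k : ℤ) + 1) : ZMod p) * ((7 : ZMod p) ^ k)⁻¹ = cubicRec (p ^ a) - 4 := by
    simpa using sum_ibinom_mul_inv_seven_pow h7 a 1 (m := p ^ a) (by omega) le_rfl
  have sum_Ico (f : ℕ → ZMod p) :
      ∑ k ∈ Finset.Ico 1 (p ^ a), f k = ∑ k ∈ Finset.range (p ^ a), f k - f 0 := by
    rw [Finset.sum_range_eq_add_Ico _ (by omega)]; ring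
  refine ⟨?_, sumPred, sumSucc, ?_, ?_⟩
  · rw [sum_Ico, sum₀]; simp [ibinom]
  · rw [sum_catalan2_mul, sum₀, sumPred]
  · have h0 : (catalan2bar 0 : ZMod p) = 2 := by simp [catalan2bar, ibinom]
    rw [sum_Ico, sum_catalan2bar_mul, sum₀, sumSucc, h0]; ring

theorem stmt_5 (p : ℕ) (hp : p.Prime) (hp7 : p ≠ 7) (a : ℕ) (ha : 0 < a) :
    ((p ^ a % 7 = 2 ∨ p ^ a % 7 = 5 →
        (∑ k ∈ Finset.Ico 1 (p ^ a),
          (ibinom (3 * k) (k : ℤ) : ZMod p) * ((7 : ZMod p) ^ k)⁻¹) = -3) ∧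
      (¬(p ^ a % 7 = 2 ∨ p ^ a % 7 = 5) →
        (∑ k ∈ Finset.Ico 1 (p ^ a),
          (ibinom (3 * k) (k : ℤ) : ZMod p) * ((7 : ZMod p) ^ k)⁻¹) = 0)) ∧
    ((p ^ a % 7 = 1 ∨ p ^ a % 7 = 6 →
        (∑ k ∈ Finset.range (p ^ a),
          (ibinom (3 * k) ((k : ℤ) - 1) : ZMod p) * ((7 : ZMod p) ^ k)⁻¹) = 0) ∧
      (p ^ a % 7 = 2 ∨ p ^ a % 7 = 5 →
        (∑ k ∈ Finset.range (p ^ a),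
          (ibinom (3 * k) ((k : ℤ) - 1) : ZMod p) * ((7 : ZMod p) ^ k)⁻¹) = -1) ∧
      (p ^ a % 7 = 3 ∨ p ^ a % 7 = 4 →
        (∑ k ∈ Finset.range (p ^ a),
          (ibinom (3 * k) ((k : ℤ) - 1) : ZMod p) * ((7 : ZMod p) ^ k)⁻¹) = 1)) ∧
    ((p ^ a % 7 = 1 ∨ p ^ a % 7 = 6 →
        (∑ k ∈ Finset.range (p ^ a),
          (ibinom (3 * k) ((k : ℤ) + 1) : ZMod p) * ((7 : ZMod p) ^ k)⁻¹) = 0) ∧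
      (p ^ a % 7 = 2 ∨ p ^ a % 7 = 5 →
        (∑ k ∈ Finset.range (p ^ a),
          (ibinom (3 * k) ((k : ℤ) + 1) : ZMod p) * ((7 : ZMod p) ^ k)⁻¹) = -7) ∧
      (p ^ a % 7 = 3 ∨ p ^ a % 7 = 4 →
        (∑ k ∈ Finset.range (p ^ a),
          (ibinom (3 * k) ((k : ℤ) + 1) : ZMod p) * ((7 : ZMod p) ^ k)⁻¹) = -1)) ∧
    ((p ^ a % 7 = 1 ∨ p ^ a % 7 = 6 →
        (∑ k ∈ Finset.range (p ^ a),
          (catalan2 k : ZMod p) * ((7 : ZMod p) ^ k)⁻¹) = 1) ∧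
      (p ^ a % 7 = 2 ∨ p ^ a % 7 = 5 →
        (∑ k ∈ Finset.range (p ^ a),
          (catalan2 k : ZMod p) * ((7 : ZMod p) ^ k)⁻¹) = 0) ∧
      (p ^ a % 7 = 3 ∨ p ^ a % 7 = 4 →
        (∑ k ∈ Finset.range (p ^ a),
          (catalan2 k : ZMod p) * ((7 : ZMod p) ^ k)⁻¹) = -1)) ∧
    ((¬(p ^ a % 7 = 1 ∨ p ^ a % 7 = 6) →
        (∑ k ∈ Finset.Ico 1 (p ^ a),
          (catalan2bar k : ZMod p) * ((7 : ZMod p) ^ k)⁻¹) = 1) ∧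
      (p ^ a % 7 = 1 ∨ p ^ a % 7 = 6 →
        (∑ k ∈ Finset.Ico 1 (p ^ a),
          (catalan2bar k : ZMod p) * ((7 : ZMod p) ^ k)⁻¹) = 0)) := by
  obtain ⟨s₁, s₂, s₃, s₄, s₅⟩ := sums_eq_cubicRec hp hp7 ha
  obtain ⟨v₁, v₂, v₃⟩ := cubicRec_prime_pow_mod hp hp7 ha
  have h7 := prime_pow_mod_seven_ne_zero hp hp7 a
  rw [s₁, s₂, s₃, s₄, s₅]
  rcases (by omega : (p ^ a % 7 = 1 ∨ p ^ a % 7 = 6) ∨ (p ^ a % 7 = 2 ∨ p ^ a % 7 = 5) ∨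
      (p ^ a % 7 = 3 ∨ p ^ a % 7 = 4)) with h | h | h <;>
    [rw [(v₁ h).1, (v₁ h).2.1, (v₁ h).2.2]; rw [(v₂ h).1, (v₂ h).2.1, (v₂ h).2.2];
      rw [(v₃ h).1, (v₃ h).2.1, (v₃ h).2.2]] <;>
    refine ⟨⟨?_, ?_⟩, ⟨?_, ?_, ?_⟩, ⟨?_, ?_, ?_⟩, ⟨?_, ?_, ?_⟩, ⟨?_, ?_⟩⟩ <;> intro h' <;>
    first | (exfalso; omega) | norm_num
end

section
/- Let p be a prime with p ≠ 19 and let a be a positive integer. Then in ℤ/pℤ, the sum ∑_{k=0}^{p^a−1} C_k^{(2)}·(19^k)⁻¹ equals 1 if p^a ≡ ±1, ±7, ±8 (mod 19), equals −4 if p^a ≡ ±2, ±3, ±5 (mod 19), and equals 3 if p^a ≡ ±4, ±6, ±9 (mod 19). -/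
/-!
Write `q = p ^ a`. Since `binom(q - 1, k) ≡ (-1) ^ k (mod p)`, the sum is the coefficient of
`x ^ (q - 1)` in `(1 - 2x) Q(x) ^ (q - 1)` with `Q(x) = (1 + x) ^ 3 - 19x`. In characteristic `p`,
`Q(x) ^ q = Q(x ^ q) ≡ 1 (mod x ^ q)`, so this is also the coefficient of `x ^ (q - 1)` in the
power series `(1 - 2x) / Q(x)`, i.e. the term `fracCoeff (q - 1)` of a linear recurrence with
characteristic polynomial `y ^ 3 - 16 y ^ 2 + 3 y + 1`. Its roots `d₀, d₁, d₂` are built from the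
cubic Gaussian periods of a primitive 19th root of unity, and
`19 fracCoeff n = ∑ (dᵢ ^ (n + 1) + dᵢ ^ n)`.
The Frobenius `x ↦ x ^ q` permutes the `dᵢ` cyclically, by a shift that depends on the class of
`q` modulo the cubes of `(ℤ/19)ˣ`; together with `d₀ d₁ d₂ = -1` each shift yields one of the
three values.
-/

open Finset

theorem Nat.Prime.cast_choose_pow_sub_one {p : ℕ} (hp : p.Prime) (a : ℕ) {k : ℕ} (hk : k < p ^ a) :
    ((p ^ a - 1).choose k : ZMod p) = (-1) ^ k := by
  induction k with
  | zero => simp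
  | succ k ih =>
    have hdvd : p ∣ (p ^ a).choose (k + 1) := hp.dvd_choose_pow k.succ_ne_zero hk.ne
    have hpascal := Nat.choose_succ_succ' (p ^ a - 1) k
    rw [Nat.sub_add_cancel (Nat.one_le_pow _ _ hp.pos)] at hpascal
    rw [← ZMod.natCast_eq_zero_iff, hpascal, Nat.cast_add, ih (by omega)] at hdvd
    linear_combination hdvd

theorem ZMod.choose_pow_sub_one_mul_neg_pow {p : ℕ} [Fact p.Prime] (a : ℕ) {c : ZMod p}
    (hc : c ≠ 0) {k : ℕ} (hk : k < p ^ a) :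
    ((p ^ a - 1).choose k : ZMod p) * (-c) ^ (p ^ a - 1 - k) = (c ^ k)⁻¹ := by
  have hfermat : (-c) ^ (p ^ a - 1) = 1 := by
    have h := ZMod.pow_card_pow (x := -c) (n := a)
    rw [← Nat.sub_add_cancel (show 1 ≤ p ^ a by omega), pow_succ] at h
    exact mul_left_cancel₀ (neg_ne_zero.mpr hc) (by rw [mul_one, mul_comm, h])
  have hsplit : (-c) ^ (p ^ a - 1 - k) * (-c) ^ k = 1 := by
    rw [← pow_add, Nat.sub_add_cancel (by omega), hfermat]
  rw [(Fact.out : p.Prime).cast_choose_pow_sub_one a hk]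
  refine eq_inv_of_mul_eq_one_left ?_
  linear_combination hsplit

section CoefficientExtraction

open Polynomial

theorem Polynomial.coeff_one_sub_two_X_mul_one_add_X_pow {R : Type*} [CommRing R] (k : ℕ) :
    ((1 - 2 * X) * (1 + X) ^ (3 * k) : R[X]).coeff k = catalan2 k := by
  rcases k with _ | k
  · simp [catalan2, ibinom]
  · have hcat : catalan2 (k + 1) =
        ((3 * (k + 1)).choose (k + 1) : ℤ) - 2 * (3 * (k + 1)).choose k := by
      simp [catalan2, ibinom]
      omega
    rw [sub_mul, one_mul, mul_assoc, coeff_sub, ← C_ofNat, coeff_C_mul, coeff_X_mul,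
      coeff_one_add_X_pow, coeff_one_add_X_pow, hcat]
    push_cast
    ring

theorem sum_catalan2_mul_inv_pow_eq_coeff {p : ℕ} [Fact p.Prime] (a : ℕ) {c : ZMod p}
    (hc : c ≠ 0) :
    ∑ k ∈ range (p ^ a), (catalan2 k : ZMod p) * (c ^ k)⁻¹ =
      ((1 - 2 * X) * ((1 + X) ^ 3 - C c * X) ^ (p ^ a - 1)).coeff (p ^ a - 1) := by
  set M := p ^ a - 1
  have hM : p ^ a = M + 1 :=
    (Nat.sub_add_cancel (Nat.one_le_pow _ _ (Fact.out : p.Prime).pos)).symm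
  rw [sub_eq_add_neg ((1 + X) ^ 3), add_pow, mul_sum, finsetSum_coeff, hM]
  refine sum_congr rfl fun k hk => ?_
  have hkM : k ≤ M := Nat.lt_succ_iff.mp (mem_range.mp hk)
  have hterm :
      (1 - 2 * X) * (((1 + X) ^ 3) ^ k * (-(C c * X)) ^ (M - k) * (M.choose k : (ZMod p)[X])) =
        C ((M.choose k : ZMod p) * (-c) ^ (M - k)) *
          ((1 - 2 * X) * (1 + X) ^ (3 * k) * X ^ (M - k)) := by
    simp only [C_mul, C_pow, C_neg, map_natCast, pow_mul]
    ring
  rw [hterm, coeff_C_mul, coeff_mul_X_pow', if_pos (Nat.sub_le M k), Nat.sub_sub_self hkM,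
    coeff_one_sub_two_X_mul_one_add_X_pow,
    ZMod.choose_pow_sub_one_mul_neg_pow a hc (hM ▸ Nat.lt_succ_of_le hkM)]
  ring

end CoefficientExtraction

/-- The coefficients of the power series `(1 - 2x) / ((1 + x) ^ 3 - 19x)`. -/
def fracCoeff : ℕ → ℤ
  | 0 => 1
  | 1 => 14
  | 2 => 221
  | n + 3 => 16 * fracCoeff (n + 2) - 3 * fracCoeff (n + 1) - fracCoeff n

section PowerSeries

open PowerSeries

theorem PowerSeries.mul_mk_fracCoeff (R : Type*) [CommRing R] :
    ((1 + X) ^ 3 - 19 * X : R⟦X⟧) * mk (fun n => (fracCoeff n : R)) = 1 - 2 * X := by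
  have hQ : ((1 + X) ^ 3 - 19 * X : R⟦X⟧) = 1 - C 16 * X ^ 1 + C 3 * X ^ 2 + X ^ 3 := by
    simp only [map_ofNat]
    ring
  have h2X : (1 - 2 * X : R⟦X⟧) = 1 - C 2 * X ^ 1 := by
    simp only [map_ofNat]
    ring
  ext n
  rw [hQ, h2X]
  simp only [sub_mul, add_mul, one_mul, mul_assoc, map_sub, map_add, coeff_C_mul,
    coeff_X_pow_mul', coeff_mk, coeff_one, coeff_X_pow]
  rcases n with _ | _ | _ | n
  · simp [fracCoeff]
  · norm_num [fracCoeff]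
  · norm_num [fracCoeff]
  · simp only [fracCoeff]
    push_cast
    ring

theorem PowerSeries.one_add_X_pow_three_sub_pow_char_pow {p : ℕ} [Fact p.Prime] (a : ℕ) :
    ((1 + X) ^ 3 - 19 * X : (ZMod p)⟦X⟧) ^ p ^ a =
      1 + X ^ p ^ a * (X ^ (2 * p ^ a) + 3 * X ^ p ^ a - 16) := by
  have : CharP (ZMod p)⟦X⟧ p :=
    charP_of_injective_algebraMap (algebraMap (ZMod p) (ZMod p)⟦X⟧).injective p
  have h19 : (19 : (ZMod p)⟦X⟧) ^ p ^ a = 19 := by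
    simpa [iterateFrobenius_def] using map_natCast (iterateFrobenius (ZMod p)⟦X⟧ p a) 19
  rw [sub_pow_char_pow, ← pow_mul, mul_comm 3, pow_mul, add_pow_char_pow, one_pow, mul_pow, h19]
  ring

theorem PowerSeries.coeff_pow_pred_eq_fracCoeff {p : ℕ} [Fact p.Prime] (a : ℕ) :
    coeff (p ^ a - 1) ((1 - 2 * X) * ((1 + X) ^ 3 - 19 * X) ^ (p ^ a - 1) : (ZMod p)⟦X⟧) =
      fracCoeff (p ^ a - 1) := by
  set q := p ^ a
  have hq : q - 1 + 1 = q := Nat.sub_add_cancel (Nat.one_le_pow _ _ (Fact.out : p.Prime).pos)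
  set Q : (ZMod p)⟦X⟧ := (1 + X) ^ 3 - 19 * X
  set F : (ZMod p)⟦X⟧ := mk fun n => (fracCoeff n : ZMod p)
  have hQ : Q ≠ 0 := fun h => by simpa [Q] using congrArg constantCoeff h
  have key : (1 - 2 * X) * Q ^ (q - 1) = F + X ^ q * (F * (X ^ (2 * q) + 3 * X ^ q - 16)) := by
    refine mul_left_cancel₀ hQ ?_
    calc Q * ((1 - 2 * X) * Q ^ (q - 1)) = (1 - 2 * X) * Q ^ (q - 1 + 1) := by ring
      _ = Q * F * (1 + X ^ q * (X ^ (2 * q) + 3 * X ^ q - 16)) := by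
        rw [hq, one_add_X_pow_three_sub_pow_char_pow, mul_mk_fracCoeff]
      _ = _ := by ring
  rw [key, map_add, coeff_mk, coeff_X_pow_mul', if_neg (by omega), add_zero]

end PowerSeries

theorem sum_catalan2_mul_inv_nineteen_pow_eq_fracCoeff {p : ℕ} [Fact p.Prime] (hp19 : p ≠ 19)
    (a : ℕ) :
    ∑ k ∈ range (p ^ a), (catalan2 k : ZMod p) * ((19 : ZMod p) ^ k)⁻¹ = fracCoeff (p ^ a - 1) := by
  have : Fact (Nat.Prime 19) := ⟨by norm_num⟩
  have h19 : (19 : ZMod p) ≠ 0 := mod_cast ZMod.prime_ne_zero p 19 hp19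
  rw [sum_catalan2_mul_inv_pow_eq_coeff a h19, ← Polynomial.C_ofNat (R := ZMod p) 2,
    ← Polynomial.coeff_coe, ← PowerSeries.coeff_pow_pred_eq_fracCoeff a]
  simp only [Polynomial.coe_mul, Polynomial.coe_sub, Polynomial.coe_pow, Polynomial.coe_add,
    Polynomial.coe_one, Polynomial.coe_X, Polynomial.coe_C]
  simp only [map_ofNat]

section Vieta

variable {R : Type*} [CommRing R] {d₀ d₁ d₂ : R}

theorem nineteen_mul_fracCoeff (h₁ : d₀ + d₁ + d₂ = 16) (h₂ : d₀ * d₁ + d₁ * d₂ + d₂ * d₀ = 3)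
    (h₃ : d₀ * d₁ * d₂ = -1) :
    ∀ n, 19 * (fracCoeff n : R) =
      d₀ ^ (n + 1) + d₁ ^ (n + 1) + d₂ ^ (n + 1) + (d₀ ^ n + d₁ ^ n + d₂ ^ n)
  | 0 => by norm_num [fracCoeff]; linear_combination -h₁
  | 1 => by norm_num [fracCoeff]; grind
  | 2 => by norm_num [fracCoeff]; grind
  | n + 3 => by
    have hroot (d : R) (hd : d = d₀ ∨ d = d₁ ∨ d = d₂) : d ^ 3 = 16 * d ^ 2 - 3 * d - 1 := by
      rcases hd with rfl | rfl | rfl <;> grind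
    have ih₀ := nineteen_mul_fracCoeff h₁ h₂ h₃ n
    have ih₁ := nineteen_mul_fracCoeff h₁ h₂ h₃ (n + 1)
    have ih₂ := nineteen_mul_fracCoeff h₁ h₂ h₃ (n + 2)
    rw [fracCoeff]
    push_cast
    linear_combination 16 * ih₂ - 3 * ih₁ - ih₀ - (d₀ ^ n + d₀ ^ (n + 1)) * hroot d₀ (by simp)
      - (d₁ ^ n + d₁ ^ (n + 1)) * hroot d₁ (by simp) - (d₂ ^ n + d₂ ^ (n + 1)) * hroot d₂ (by simp)

theorem nineteen_mul_fracCoeff_pred (h₁ : d₀ + d₁ + d₂ = 16)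
    (h₂ : d₀ * d₁ + d₁ * d₂ + d₂ * d₀ = 3) (h₃ : d₀ * d₁ * d₂ = -1) {q : ℕ} (hq : 0 < q) :
    19 * (fracCoeff (q - 1) : R) =
      d₀ ^ q + d₁ ^ q + d₂ ^ q - (d₀ ^ q * d₁ * d₂ + d₁ ^ q * d₂ * d₀ + d₂ ^ q * d₀ * d₁) := by
  obtain ⟨n, rfl⟩ : ∃ n, q = n + 1 := ⟨q - 1, by omega⟩
  rw [Nat.add_sub_cancel, nineteen_mul_fracCoeff h₁ h₂ h₃]
  linear_combination (d₀ ^ n + d₁ ^ n + d₂ ^ n) * h₃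

end Vieta

theorem pow_eq_one_of_geom_sum_eq_zero {R : Type*} [Ring R] {x : R} {n : ℕ}
    (h : ∑ i ∈ range n, x ^ i = 0) : x ^ n = 1 := by
  have h' := geom_sum_mul x n
  rw [h, zero_mul] at h'
  exact sub_eq_zero.mp h'.symm

section GaussPeriods

variable {R : Type*} [CommRing R]

/-- `1, 7, 8, 11, 12, 18` are the cubes in `(ℤ/19)ˣ`, so for a primitive 19th root of unity this
is a cubic Gaussian period. -/
def cubicPeriod (w : R) : R := w + w ^ 7 + w ^ 8 + w ^ 11 + w ^ 12 + w ^ 18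

/-- For a primitive 19th root of unity `ζ`, the three values at `ζ`, `ζ ^ 2`, `ζ ^ 4` are the
roots of `y ^ 3 - 16 y ^ 2 + 3 y + 1`, the reciprocal of `(1 + x) ^ 3 - 19 x`. -/
def periodRoot (w : R) : R := 7 + cubicPeriod w + 4 * cubicPeriod (w ^ 2)

theorem map_periodRoot {S : Type*} [CommRing S] (f : R →+* S) (w : R) :
    f (periodRoot w) = periodRoot (f w) := by
  simp [periodRoot, cubicPeriod, map_ofNat]

variable {w : R}

theorem cubicPeriod_pow_eight (hw : w ^ 19 = 1) : cubicPeriod (w ^ 8) = cubicPeriod w := by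
  unfold cubicPeriod
  grind

theorem cubicPeriod_sq (hw : w ^ 19 = 1) :
    cubicPeriod w ^ 2 = 6 + 2 * cubicPeriod w + cubicPeriod (w ^ 2) + 2 * cubicPeriod (w ^ 4) := by
  unfold cubicPeriod
  grind

theorem cubicPeriod_mul_cubicPeriod_sq (hw : w ^ 19 = 1) :
    cubicPeriod w * cubicPeriod (w ^ 2) =
      cubicPeriod w + 2 * cubicPeriod (w ^ 2) + 3 * cubicPeriod (w ^ 4) := by
  unfold cubicPeriod
  grind

theorem cubicPeriod_add (hw : ∑ i ∈ range 19, w ^ i = 0) :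
    cubicPeriod w + cubicPeriod (w ^ 2) + cubicPeriod (w ^ 4) = -1 := by
  simp only [sum_range_succ, sum_range_zero] at hw
  unfold cubicPeriod
  grind

theorem periodRoot_pow_eight (hw : w ^ 19 = 1) : periodRoot (w ^ 8) = periodRoot w := by
  have hw2 : (w ^ 2) ^ 19 = 1 := by rw [pow_right_comm, hw, one_pow]
  rw [periodRoot, periodRoot, cubicPeriod_pow_eight hw, pow_right_comm, cubicPeriod_pow_eight hw2]

theorem periodRoot_pow_eight_pow (hw : w ^ 19 = 1) (k : ℕ) :
    periodRoot (w ^ 8 ^ k) = periodRoot w := by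
  induction k with
  | zero => simp
  | succ k ih =>
    rw [pow_succ, pow_mul, periodRoot_pow_eight (by rw [pow_right_comm, hw, one_pow]), ih]

theorem periodRoot_pow_of_modEq (hw : w ^ 19 = 1) {n s k : ℕ} (h : n ≡ s * 8 ^ k [MOD 19]) :
    periodRoot (w ^ n) = periodRoot (w ^ s) := by
  rw [pow_eq_pow_of_modEq h hw, pow_mul,
    periodRoot_pow_eight_pow (by rw [pow_right_comm, hw, one_pow])]

theorem periodRoot_pow_char_pow {p : ℕ} [ExpChar R p] (hw : w ^ 19 = 1) {a s j k : ℕ}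
    (h : p ^ a ≡ 2 ^ j * 8 ^ k [MOD 19]) :
    periodRoot (w ^ s) ^ p ^ a = periodRoot (w ^ (s * 2 ^ j)) := by
  rw [← iterateFrobenius_def, map_periodRoot, iterateFrobenius_def, ← pow_mul]
  exact periodRoot_pow_of_modEq hw (by simpa [mul_assoc] using h.mul_left s)

theorem periodRoot_identities (hw : ∑ i ∈ range 19, w ^ i = 0) :
    let d₀ := periodRoot w
    let d₁ := periodRoot (w ^ 2)
    let d₂ := periodRoot (w ^ 4)
    d₀ + d₁ + d₂ = 16 ∧ d₀ * d₁ + d₁ * d₂ + d₂ * d₀ = 3 ∧ d₀ * d₁ * d₂ = -1 ∧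
      d₀ ^ 2 * d₁ + d₁ ^ 2 * d₂ + d₂ ^ 2 * d₀ = 92 ∧
      d₀ ^ 2 * d₂ + d₁ ^ 2 * d₀ + d₂ ^ 2 * d₁ = -41 := by
  have h19 := pow_eq_one_of_geom_sum_eq_zero hw
  have hsum := cubicPeriod_add hw
  have hxx := cubicPeriod_sq h19
  have hxy := cubicPeriod_mul_cubicPeriod_sq h19
  simp only [periodRoot, ← pow_mul, Nat.reduceMul, cubicPeriod_pow_eight h19]
  refine ⟨?_, ?_, ?_, ?_, ?_⟩ <;> grind

end GaussPeriods

theorem nineteen_mul_fracCoeff_pred_eq_of_modEq {R : Type*} [CommRing R] {p : ℕ} [ExpChar R p]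
    {w : R} (hw : ∑ i ∈ range 19, w ^ i = 0) {a k : ℕ} (j : Fin 3)
    (h : p ^ a ≡ 2 ^ (j : ℕ) * 8 ^ k [MOD 19]) :
    19 * (fracCoeff (p ^ a - 1) : R) = 19 * ((![1, -4, 3] j : ℤ) : R) := by
  have h19 := pow_eq_one_of_geom_sum_eq_zero hw
  obtain ⟨e₁, e₂, e₃, c₁, c₂⟩ := periodRoot_identities hw
  have hfrob (s : ℕ) := periodRoot_pow_char_pow (s := s) h19 h
  rw [nineteen_mul_fracCoeff_pred e₁ e₂ e₃ (pow_pos (expChar_pos R p) a), hfrob 2, hfrob 4,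
    show periodRoot w ^ p ^ a = periodRoot (w ^ 2 ^ (j : ℕ)) by simpa using hfrob 1]
  have h8 : periodRoot (w ^ 8) = periodRoot w := periodRoot_pow_eight h19
  have h16 : periodRoot (w ^ 16) = periodRoot (w ^ 2) := by
    rw [show 16 = 2 * 8 by rfl, pow_mul,
      periodRoot_pow_eight (by rw [pow_right_comm, h19, one_pow])]
  fin_cases j <;> simp [h8, h16]
  · linear_combination e₁ - 3 * e₃
  · linear_combination e₁ - c₁
  · linear_combination e₁ - c₂

theorem fracCoeff_pred_eq_of_modEq {p : ℕ} [Fact p.Prime] (hp19 : p ≠ 19) {a k : ℕ} (j : Fin 3)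
    (h : p ^ a ≡ 2 ^ (j : ℕ) * 8 ^ k [MOD 19]) :
    (fracCoeff (p ^ a - 1) : ZMod p) = ((![1, -4, 3] j : ℤ) : ZMod p) := by
  have : Fact (Nat.Prime 19) := ⟨by norm_num⟩
  have h19 := ZMod.prime_ne_zero p 19 hp19
  have : NeZero ((19 : ℕ) : ZMod p) := ⟨h19⟩
  let L := CyclotomicField 19 (ZMod p)
  have hinj := (algebraMap (ZMod p) L).injective
  have : CharP L p := charP_of_injective_algebraMap hinj p
  have hζ := IsCyclotomicExtension.zeta_spec 19 (ZMod p) L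
  have key := nineteen_mul_fracCoeff_pred_eq_of_modEq (hζ.geom_sum_eq_zero (by norm_num)) j h
  have h19L : (19 : L) ≠ 0 := by
    rw [← map_ofNat (algebraMap (ZMod p) L) 19]
    exact (map_ne_zero _).mpr (by exact_mod_cast h19)
  apply hinj
  simpa using mul_left_cancel₀ h19L key

theorem stmt_7_general (p : ℕ) (hp : p.Prime) (hp19 : p ≠ 19) (a : ℕ) :
    (p ^ a % 19 = 1 ∨ p ^ a % 19 = 18 ∨ p ^ a % 19 = 7 ∨ p ^ a % 19 = 12 ∨
        p ^ a % 19 = 8 ∨ p ^ a % 19 = 11 →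
      (∑ k ∈ Finset.range (p ^ a),
        (catalan2 k : ZMod p) * ((19 : ZMod p) ^ k)⁻¹) = 1) ∧
    (p ^ a % 19 = 2 ∨ p ^ a % 19 = 17 ∨ p ^ a % 19 = 3 ∨ p ^ a % 19 = 16 ∨
        p ^ a % 19 = 5 ∨ p ^ a % 19 = 14 →
      (∑ k ∈ Finset.range (p ^ a),
        (catalan2 k : ZMod p) * ((19 : ZMod p) ^ k)⁻¹) = -4) ∧
    (p ^ a % 19 = 4 ∨ p ^ a % 19 = 15 ∨ p ^ a % 19 = 6 ∨ p ^ a % 19 = 13 ∨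
        p ^ a % 19 = 9 ∨ p ^ a % 19 = 10 →
      (∑ k ∈ Finset.range (p ^ a),
        (catalan2 k : ZMod p) * ((19 : ZMod p) ^ k)⁻¹) = 3) := by
  have : Fact p.Prime := ⟨hp⟩
  have key (j : Fin 3) {v : ZMod p} (hv : ((![1, -4, 3] j : ℤ) : ZMod p) = v)
      (hj : ∃ k < 6, p ^ a % 19 = 2 ^ (j : ℕ) * 8 ^ k % 19) :
      ∑ k ∈ range (p ^ a), (catalan2 k : ZMod p) * ((19 : ZMod p) ^ k)⁻¹ = v := by
    obtain ⟨k, -, hk⟩ := hj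
    rw [sum_catalan2_mul_inv_nineteen_pow_eq_fracCoeff hp19, fracCoeff_pred_eq_of_modEq hp19 j hk,
      hv]
  refine ⟨fun h => key 0 (by simp) ?_, fun h => key 1 (by simp) ?_, fun h => key 2 (by simp) ?_⟩ <;>
    rcases h with h | h | h | h | h | h <;> rw [h] <;> decide

theorem stmt_7 (p : ℕ) (hp : p.Prime) (hp19 : p ≠ 19) (a : ℕ) (ha : 0 < a) :
    (p ^ a % 19 = 1 ∨ p ^ a % 19 = 18 ∨ p ^ a % 19 = 7 ∨ p ^ a % 19 = 12 ∨
        p ^ a % 19 = 8 ∨ p ^ a % 19 = 11 →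
      (∑ k ∈ Finset.range (p ^ a),
        (catalan2 k : ZMod p) * ((19 : ZMod p) ^ k)⁻¹) = 1) ∧
    (p ^ a % 19 = 2 ∨ p ^ a % 19 = 17 ∨ p ^ a % 19 = 3 ∨ p ^ a % 19 = 16 ∨
        p ^ a % 19 = 5 ∨ p ^ a % 19 = 14 →
      (∑ k ∈ Finset.range (p ^ a),
        (catalan2 k : ZMod p) * ((19 : ZMod p) ^ k)⁻¹) = -4) ∧
    (p ^ a % 19 = 4 ∨ p ^ a % 19 = 15 ∨ p ^ a % 19 = 6 ∨ p ^ a % 19 = 13 ∨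
        p ^ a % 19 = 9 ∨ p ^ a % 19 = 10 →
      (∑ k ∈ Finset.range (p ^ a),
        (catalan2 k : ZMod p) * ((19 : ZMod p) ^ k)⁻¹) = 3) :=
  stmt_7_general p hp hp19 a
end

section
/- Let p be a prime with p ≠ 5, let a be a positive integer, and for an integer d with −2 ≤ d ≤ 3p^a set S_d = ∑_{k=0}^{p^a−1} binom(4k, k+d)·(5^k)⁻¹ ∈ ℤ/pℤ. Then for every integer d with 2 ≤ d ≤ 3p^a, in ℤ/pℤ one has S_d − S_{d−1} + 6·S_{d−2} + 4·S_{d−3} + S_{d−4} = 6 if d = p^a + 1, = 4 if d = 2p^a + 1, and = 0 otherwise. -/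
lemma ibinom_succ (n : ℕ) (j : ℤ) : ibinom (n+1) j = ibinom n j + ibinom n (j-1) := by
  unfold ibinom
  rcases lt_trichotomy j 0 with h | h | h
  · rw [if_neg (by omega), if_neg (by omega), if_neg (by omega)]
  · subst h; norm_num
  · rw [if_pos h.le, if_pos h.le, if_pos (by omega)]
    have h2 : j.toNat = (j-1).toNat + 1 := by omega
    rw [h2, Nat.choose_succ_succ]
    simp [Nat.succ_eq_add_one]
    omega

lemma ibinom_add_four (n : ℕ) (j : ℤ) :
    ibinom (n+4) j = ibinom n j + 4 * ibinom n (j-1) + 6 * ibinom n (j-2)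
      + 4 * ibinom n (j-3) + ibinom n (j-4) := by
  have h4 : ∀ j, ibinom (n+4) j = ibinom (n+3) j + ibinom (n+3) (j-1) :=
    fun j => ibinom_succ (n+3) j
  have h3 : ∀ j, ibinom (n+3) j = ibinom (n+2) j + ibinom (n+2) (j-1) :=
    fun j => ibinom_succ (n+2) j
  have h2 : ∀ j, ibinom (n+2) j = ibinom (n+1) j + ibinom (n+1) (j-1) :=
    fun j => ibinom_succ (n+1) j
  have h1 : ∀ j, ibinom (n+1) j = ibinom n j + ibinom n (j-1) :=
    fun j => ibinom_succ n j
  simp only [h4, h3, h2, h1, show j-1-1 = j-2 from by ring, show j-2-1 = j-3 from by ring,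
    show j-3-1 = j-4 from by ring]
  ring

lemma lucas_four (p : ℕ) [Fact p.Prime] (a : ℕ) (m : ℕ) :
    (((4 * p ^ a).choose m : ℕ) : ZMod p) =
      if p ^ a ∣ m then ((Nat.choose 4 (m / p ^ a) : ℕ) : ZMod p) else 0 := by
  induction a generalizing m with
  | zero => simp
  | succ a ih =>
    have hp := (Fact.out : p.Prime)
    have hp0 : 0 < p := hp.pos
    have key := (Choose.choose_modEq_choose_mod_mul_choose_div_nat
      (n := 4 * p ^ (a+1)) (k := m) (p := p))
    have hmod : (4 * p ^ (a+1)) % p = 0 := by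
      have : p ∣ 4 * p ^ (a+1) := Dvd.dvd.mul_left (dvd_pow_self p (by omega)) 4
      omega
    have hdiv : (4 * p ^ (a+1)) / p = 4 * p ^ a := by
      rw [pow_succ, ← mul_assoc, Nat.mul_div_cancel _ hp0]
    rw [hmod, hdiv] at key
    have hcast : (((4 * p ^ (a+1)).choose m : ℕ) : ZMod p)
        = ((Nat.choose 0 (m % p) * Nat.choose (4 * p ^ a) (m / p) : ℕ) : ZMod p) :=
      (ZMod.natCast_eq_natCast_iff _ _ _).mpr key
    rw [hcast]
    by_cases hpm : p ∣ m
    · have hm0 : m % p = 0 := by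
        obtain ⟨t, rfl⟩ := hpm; exact Nat.mul_mod_right p t
      have hiff : p ^ a ∣ m / p ↔ p ^ (a+1) ∣ m := by
        rw [Nat.dvd_div_iff_mul_dvd hpm, ← pow_succ']
      have hdd : m / p / p ^ a = m / p ^ (a+1) := by
        rw [Nat.div_div_eq_div_mul, ← pow_succ']
      rw [hm0, Nat.choose_zero_right, one_mul, ih, hdd]
      exact if_congr hiff rfl rfl
    · have hm0 : m % p ≠ 0 := fun h => hpm (Nat.dvd_of_mod_eq_zero h)
      have h0 : Nat.choose 0 (m % p) = 0 := Nat.choose_eq_zero_of_lt (by omega)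
      rw [h0, zero_mul, Nat.cast_zero, if_neg]
      intro hdvd
      exact hpm (dvd_trans (dvd_pow_self p (by omega)) hdvd)

theorem stmt_9 (p : ℕ) (hp : p.Prime) (hp5 : p ≠ 5) (a : ℕ) (ha : 0 < a) :
    let S : ℤ → ZMod p := fun d =>
      ∑ k ∈ Finset.range (p ^ a), (ibinom (4 * k) ((k : ℤ) + d) : ZMod p) * ((5 : ZMod p) ^ k)⁻¹
    ∀ d : ℤ, 2 ≤ d → d ≤ 3 * (p : ℤ) ^ a →
      S d - S (d - 1) + 6 * S (d - 2) + 4 * S (d - 3) + S (d - 4) =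
        if d = (p : ℤ) ^ a + 1 then 6 else if d = 2 * (p : ℤ) ^ a + 1 then 4 else 0 := by
  intro S d hd2 hd3
  haveI : Fact p.Prime := ⟨hp⟩
  set N := p ^ a with hN
  have hN1 : 1 ≤ N := Nat.one_le_pow _ _ hp.pos
  have hNq : (N : ℤ) = (p : ℤ) ^ a := by push_cast [hN]; ring
  have h5 : (5 : ZMod p) ≠ 0 := by
    have : ¬ ((5 : ℕ) : ZMod p) = 0 := by
      rw [ZMod.natCast_eq_zero_iff]
      intro hdvd
      exact hp5 ((Nat.prime_dvd_prime_iff_eq hp (by norm_num)).mp hdvd)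
    simpa using this
  set g : ℕ → ZMod p := fun k =>
    (ibinom (4*k) ((k:ℤ) + d - 1) : ZMod p) * ((5:ZMod p)^k)⁻¹ * 5 with hg
  have step : ∀ k : ℕ,
      (ibinom (4*k) ((k:ℤ)+d) : ZMod p) * ((5:ZMod p)^k)⁻¹
      - (ibinom (4*k) ((k:ℤ)+(d-1)) : ZMod p) * ((5:ZMod p)^k)⁻¹
      + 6 * ((ibinom (4*k) ((k:ℤ)+(d-2)) : ZMod p) * ((5:ZMod p)^k)⁻¹)
      + 4 * ((ibinom (4*k) ((k:ℤ)+(d-3)) : ZMod p) * ((5:ZMod p)^k)⁻¹)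
      + (ibinom (4*k) ((k:ℤ)+(d-4)) : ZMod p) * ((5:ZMod p)^k)⁻¹
      = g (k+1) - g k := by
    intro k
    have hgk1 : g (k+1) = (ibinom (4*k+4) ((k:ℤ)+d) : ZMod p) * ((5:ZMod p)^k)⁻¹ := by
      simp only [hg]
      rw [show 4*(k+1) = 4*k+4 by ring,
        show ((k+1:ℕ):ℤ) + d - 1 = (k:ℤ) + d by push_cast; ring,
        pow_succ, mul_inv, mul_assoc, mul_assoc, inv_mul_cancel₀ h5, mul_one]
    rw [hgk1, ibinom_add_four, show (k:ℤ) + d - 1 = (k:ℤ)+(d-1) by ring,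
      show (k:ℤ) + d - 2 = (k:ℤ)+(d-2) by ring,
      show (k:ℤ) + d - 3 = (k:ℤ)+(d-3) by ring,
      show (k:ℤ) + d - 4 = (k:ℤ)+(d-4) by ring]
    simp only [hg]
    rw [show (k:ℤ) + d - 1 = (k:ℤ)+(d-1) by ring]
    push_cast
    ring
  have hsum : S d - S (d-1) + 6*S (d-2) + 4*S (d-3) + S (d-4)
      = ∑ k ∈ Finset.range N, (g (k+1) - g k) := by
    simp only [S, Finset.mul_sum, ← Finset.sum_sub_distrib, ← Finset.sum_add_distrib]
    exact Finset.sum_congr rfl (fun k _ => step k)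
  rw [hsum, Finset.sum_range_sub]
  have hg0 : g 0 = 0 := by
    simp only [hg]
    have : ibinom (4*0) ((0:ℕ) + d - 1) = 0 := by
      unfold ibinom
      rw [if_pos (by omega)]
      exact Nat.choose_eq_zero_of_lt (by omega)
    rw [this]
    simp
  have h5N : (((5:ZMod p)^N)⁻¹) * 5 = 1 := by
    rw [hN, ZMod.pow_card_pow]
    exact inv_mul_cancel₀ h5
  set m : ℕ := ((N:ℤ) + d - 1).toNat with hm
  have hmZ : (m:ℤ) = (N:ℤ) + d - 1 := by omega
  have hgN : g N = (((4*N).choose m : ℕ) : ZMod p) := by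
    simp only [hg]
    rw [mul_assoc, h5N, mul_one]
    unfold ibinom
    rw [if_pos (by omega)]
  rw [hg0, sub_zero, hgN, hN, lucas_four]
  rw [← hN]
  by_cases hc2 : d = (p:ℤ)^a + 1
  · have hm2 : m = N * 2 := by omega
    have hdq : m / N = 2 := by rw [hm2, Nat.mul_div_cancel_left _ (by omega)]
    rw [if_pos hc2, if_pos ⟨2, hm2⟩, hdq]
    norm_num [Nat.choose]
  · by_cases hc3 : d = 2*(p:ℤ)^a + 1
    · have hm3 : m = N * 3 := by omega
      have hdq : m / N = 3 := by rw [hm3, Nat.mul_div_cancel_left _ (by omega)]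
      rw [if_neg hc2, if_pos hc3, if_pos ⟨3, hm3⟩, hdq]
      norm_num [Nat.choose]
    · rw [if_neg hc2, if_neg hc3, if_neg]
      rintro ⟨c, hc⟩
      have hcZ : (m:ℤ) = (N:ℤ) * (c:ℤ) := by push_cast [hc]; ring
      have hNZ : (1:ℤ) ≤ (N:ℤ) := by exact_mod_cast hN1
      have hd3' : d ≤ 3 * (N:ℤ) := by rw [hNq]; exact hd3
      have hc0 : (0:ℤ) ≤ (c:ℤ) := Int.ofNat_nonneg c
      have h2c : 2 ≤ (c:ℤ) := by nlinarith
      have h3c : (c:ℤ) ≤ 3 := by nlinarith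
      have hcc : (c:ℤ) = 2 ∨ (c:ℤ) = 3 := by omega
      rcases hcc with h | h
      · rw [h] at hcZ; exact hc2 (by omega)
      · rw [h] at hcZ; exact hc3 (by omega)
end

section
/- Let p > 3 be a prime with p ≠ 7, let a be a positive integer, and let ε = J(p^a | 3) be the Jacobi symbol of p^a with respect to 3. Then for every integer d with −1 ≤ d ≤ p^a, in ℤ/pℤ one has: ∑_{k=0}^{p^a−1} 3^k·(8^k)⁻¹·binom(3k, k+d) = (−3)^{d/2}·(1 + 27ε)/28 if d is even, and = (−3)^{(d+3)/2}·(1 − ε)/28 if d is odd. -/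
open Polynomial Finset

namespace S18
variable {p : ℕ} [Fact p.Prime]


/-- telescoping identity -/
lemma telescope (x : ZMod p) (q : ℕ) :
    (C x * (1+X)^3 - X) * (∑ k ∈ range q, C (x^k) * (1+X)^(3*k) * X^(q-1-k))
      = C (x^q) * (1+X)^(3*q) * X^(q-q) - C (x^0) * (1+X)^(3*0) * X^(q-0) := by
  rw [Finset.mul_sum, ← Finset.sum_range_sub (fun k => C (x^k) * (1+X)^(3*k) * X^(q-k)) q]
  refine Finset.sum_congr rfl fun k hk => ?_
  simp only [mem_range] at hk
  have h1 : q - (k+1) = q-1-k := by omega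
  have h2 : q - k = (q-1-k) + 1 := by omega
  rw [h1, h2]
  simp only [map_pow]
  ring

lemma key_poly (hp3 : 3 < p) (a : ℕ) (x : ZMod p) (hx : (8 : ZMod p) * x = 3) :
    ((X+3) * (3*X^2+1)) * (∑ k ∈ range (p^a), C (x^k) * (1+X)^(3*k) * X^(p^a-1-k))
      = (X^(p^a)+3) * (3*X^(2*(p^a))+1) := by
  set q := p^a with hq
  have h8 : C (8 : ZMod p) * (C x * (1+X)^3 - X) = (X+3) * (3*X^2+1) := by
    rw [mul_sub, ← mul_assoc, ← C_mul, hx, map_ofNat, map_ofNat]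
    ring
  have hfrob : ((1:(ZMod p)[X])+X)^q = 1 + X^q := by
    have := add_pow_char_pow (1 : (ZMod p)[X]) X p a
    simpa using this
  have hxq : x ^ q = x := ZMod.pow_card_pow x
  have h := telescope x q
  calc ((X+3) * (3*X^2+1)) * (∑ k ∈ range q, C (x^k) * (1+X)^(3*k) * X^(q-1-k))
      = C (8 : ZMod p) * ((C x * (1+X)^3 - X) * (∑ k ∈ range q, C (x^k) * (1+X)^(3*k) * X^(q-1-k))) := by
        rw [← mul_assoc, h8]
    _ = C (8 : ZMod p) * (C (x^q) * (1+X)^(3*q) * X^(q-q) - C (x^0) * (1+X)^(3*0) * X^(q-0)) := by rw [h]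
    _ = C (8 : ZMod p) * (C x * ((1+X)^q)^3 - X^q) := by
        rw [hxq, Nat.sub_self, Nat.sub_zero, pow_zero, pow_zero, map_one, pow_zero, mul_comm 3 q, pow_mul]
        ring
    _ = C (8 : ZMod p) * (C x * (1+X^q)^3 - X^q) := by rw [hfrob]
    _ = (X^q+3) * (3*X^(2*q)+1) := by
        rw [mul_sub, ← mul_assoc, ← C_mul, hx, map_ofNat, map_ofNat, mul_comm 2 q, pow_mul]
        ring



lemma neg3_pow_q (a : ℕ) : ((-3 : (ZMod p)[X]))^(p^a) = -3 := by
  have h : ((-3 : ZMod p))^(p^a) = -3 := ZMod.pow_card_pow _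
  have : ((-3 : (ZMod p)[X])) = C (-3 : ZMod p) := by rw [map_neg, map_ofNat]
  rw [this, ← map_pow, h, map_neg, map_ofNat]

lemma A_mul (a : ℕ) :
    (∑ i ∈ range (p^a), X^i * (-3:(ZMod p)[X])^(p^a-1-i)) * (X+3) = X^(p^a) + 3 := by
  have h := geom_sum₂_mul (X : (ZMod p)[X]) (-3) (p^a)
  calc (∑ i ∈ range (p^a), X^i * (-3:(ZMod p)[X])^(p^a-1-i)) * (X+3)
      = (∑ i ∈ range (p^a), X^i * (-3:(ZMod p)[X])^(p^a-1-i)) * (X - (-3)) := by ring_nf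
    _ = X^(p^a) - (-3:(ZMod p)[X])^(p^a) := h
    _ = X^(p^a) + 3 := by rw [neg3_pow_q]; ring

lemma B_mul (a : ℕ) :
    (∑ j ∈ range (p^a), ((-3)*X^2 : (ZMod p)[X])^j) * (3*X^2+1) = 3*X^(2*(p^a))+1 := by
  have h := geom_sum_mul ((-3)*X^2 : (ZMod p)[X]) (p^a)
  have hpow : ((-3)*X^2 : (ZMod p)[X])^(p^a) = (-3) * X^(2*(p^a)) := by
    rw [mul_pow, neg3_pow_q, ← pow_mul]
  rw [hpow] at h
  linear_combination -h

lemma X_add_three_ne_zero (hp3 : 3 < p) : (X + 3 : (ZMod p)[X]) ≠ 0 := by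
  have h3 : (3 : ZMod p) ≠ 0 := by
    have : ((3:ℕ) : ZMod p) ≠ 0 := by
      rw [Ne, ZMod.natCast_eq_zero_iff]
      intro h
      have := Nat.le_of_dvd (by norm_num) h
      omega
    simpa using this
  intro h
  have := congrArg (fun f => Polynomial.eval 0 f) h
  simp at this
  exact h3 this

lemma three_X_sq_ne_zero : (3*X^2 + 1 : (ZMod p)[X]) ≠ 0 := by
  intro h
  have := congrArg (fun f => Polynomial.eval 0 f) h
  simp at this

lemma G_eq (hp3 : 3 < p) (a : ℕ) (x : ZMod p) (hx : (8 : ZMod p) * x = 3)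
    (hkey : ((X+3) * (3*X^2+1)) * (∑ k ∈ range (p^a), C (x^k) * (1+X)^(3*k) * X^(p^a-1-k))
      = (X^(p^a)+3) * (3*X^(2*(p^a))+1)) :
    (∑ k ∈ range (p^a), C (x^k) * (1+X)^(3*k) * X^(p^a-1-k))
      = (∑ i ∈ range (p^a), X^i * (-3:(ZMod p)[X])^(p^a-1-i))
        * (∑ j ∈ range (p^a), ((-3)*X^2 : (ZMod p)[X])^j) := by
  have hne : ((X+3) * (3*X^2+1) : (ZMod p)[X]) ≠ 0 :=
    mul_ne_zero (X_add_three_ne_zero hp3) three_X_sq_ne_zero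
  apply mul_left_cancel₀ hne
  rw [hkey, ← A_mul a, ← B_mul a]
  ring



lemma coeffG (x : ZMod p) (q n : ℕ) :
    (∑ k ∈ range q, C (x^k) * (1+X)^(3*k) * X^(q-1-k)).coeff n
      = ∑ k ∈ range q, x^k * (if q-1-k ≤ n then ((3*k).choose (n-(q-1-k)) : ZMod p) else 0) := by
  rw [finset_sum_coeff]
  refine Finset.sum_congr rfl fun k _ => ?_
  rw [mul_assoc, coeff_C_mul, coeff_mul_X_pow']
  congr 1
  split_ifs with h
  · rw [coeff_one_add_X_pow]
  · rfl

lemma coeffA (q m : ℕ) :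
    (∑ i ∈ range q, X^i * (-3:(ZMod p)[X])^(q-1-i)).coeff m
      = if m < q then ((-3:ZMod p)^(q-1-m)) else 0 := by
  have hterm : ∀ i, (X^i * (-3:(ZMod p)[X])^(q-1-i)) = C ((-3:ZMod p)^(q-1-i)) * X^i := by
    intro i
    have : ((-3 : (ZMod p)[X])) = C (-3 : ZMod p) := by rw [map_neg, map_ofNat]
    rw [this, ← map_pow, mul_comm]
  simp only [hterm]
  rw [finset_sum_coeff]
  simp only [coeff_C_mul, coeff_X_pow, mul_ite, mul_one, mul_zero]
  rw [Finset.sum_ite_eq (range q) m (fun i => ((-3:ZMod p)^(q-1-i)))]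
  simp [mem_range]

lemma coeffH (q n : ℕ) :
    ((∑ i ∈ range q, X^i * (-3:(ZMod p)[X])^(q-1-i))
        * (∑ j ∈ range q, ((-3)*X^2 : (ZMod p)[X])^j)).coeff n
      = ∑ j ∈ range q, (-3:ZMod p)^j *
          (if 2*j ≤ n then (if n-2*j < q then ((-3:ZMod p)^(q-1-(n-2*j))) else 0) else 0) := by
  rw [Finset.mul_sum, finset_sum_coeff]
  refine Finset.sum_congr rfl fun j _ => ?_
  have hpow : ((-3)*X^2 : (ZMod p)[X])^j = C ((-3:ZMod p)^j) * X^(2*j) := by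
    have h1 : ((-3 : (ZMod p)[X])) = C (-3 : ZMod p) := by rw [map_neg, map_ofNat]
    rw [mul_pow, h1, ← map_pow, ← pow_mul]
  rw [hpow, mul_left_comm, coeff_C_mul, coeff_mul_X_pow', coeffA]



lemma sumIco (q n j0 j1 : ℕ) (hm1 : (-3:ZMod p)^(q-1) = 1) (hq1 : 1 ≤ q) (hj1 : j1 < q)
    (hiff : ∀ j, (j < q ∧ 2*j ≤ n ∧ n - 2*j < q) ↔ (j0 ≤ j ∧ j ≤ j1)) :
    (-3:ZMod p)^n * (∑ j ∈ range q, (-3:ZMod p)^j *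
        (if 2*j ≤ n then (if n-2*j < q then ((-3:ZMod p)^(q-1-(n-2*j))) else 0) else 0))
      = ∑ j ∈ Ico j0 (j1+1), (-27:ZMod p)^j := by
  rw [Finset.mul_sum]
  have hsub : Ico j0 (j1+1) ⊆ range q := by
    intro j hj
    simp only [mem_Ico, mem_range] at hj ⊢
    omega
  rw [← Finset.sum_subset hsub (fun j hj hnj => ?_)]
  · refine Finset.sum_congr rfl fun j hj => ?_
    simp only [mem_Ico] at hj
    obtain ⟨hjq, h2j, hnq⟩ := (hiff j).mpr ⟨hj.1, by omega⟩
    rw [if_pos h2j, if_pos hnq]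
    have he : n + (j + (q-1-(n-2*j))) = (q-1) + 3*j := by omega
    calc (-3:ZMod p)^n * ((-3:ZMod p)^j * (-3:ZMod p)^(q-1-(n-2*j)))
        = (-3:ZMod p)^(n + (j + (q-1-(n-2*j)))) := by rw [pow_add, pow_add]
      _ = (-3:ZMod p)^((q-1) + 3*j) := by rw [he]
      _ = ((-3:ZMod p)^(q-1)) * (((-3:ZMod p))^3)^j := by rw [pow_add, pow_mul]
      _ = (-27:ZMod p)^j := by rw [hm1, one_mul]; norm_num
  · simp only [mem_range] at hj
    simp only [mem_Ico, not_and, not_lt] at hnj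
    have : ¬(2*j ≤ n ∧ n - 2*j < q) := by
      intro hc
      have := (hiff j).mp ⟨hj, hc.1, hc.2⟩
      omega
    rcases Nat.lt_or_ge n (2*j) with h | h
    · rw [if_neg (by omega), mul_zero, mul_zero]
    · rw [if_pos h, if_neg (by omega), mul_zero, mul_zero]

lemma jac_eq (hp3 : 3 < p) : jacobiSym (-3) p = jacobiSym (p:ℤ) 3 := by
  have hpo : p % 2 = 1 := by
    rcases Nat.Prime.eq_two_or_odd (Fact.out : p.Prime) with h | h
    · omega
    · exact h
  have hop : Odd p := Nat.odd_iff.mpr hpo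
  have h3 : jacobiSym ((3:ℕ):ℤ) p = (-1)^(3/2*(p/2)) * jacobiSym (p:ℤ) 3 :=
    jacobiSym.quadratic_reciprocity (by decide) hop
  rw [show (-3:ℤ) = -1 * 3 by norm_num, jacobiSym.mul_left, jacobiSym.at_neg_one hop,
    ZMod.χ₄_eq_neg_one_pow hpo]
  have h3' : jacobiSym (3:ℤ) p = (-1)^(p/2) * jacobiSym (p:ℤ) 3 := by
    simpa using h3
  rw [h3', ← mul_assoc, ← mul_pow]
  norm_num

lemma geom_nat (a : ℕ) (hp1 : 1 ≤ p) : (p-1) * (∑ i ∈ range a, p^i) = p^a - 1 := by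
  have h := geom_sum_mul ((p:ℤ)) a
  have hc : ((∑ i ∈ range a, p^i : ℕ) : ℤ) = ∑ i ∈ range a, (p:ℤ)^i := by push_cast; ring
  have hq1 : 1 ≤ p^a := Nat.one_le_pow _ _ hp1
  have : (((p-1) * (∑ i ∈ range a, p^i) : ℕ) : ℤ) = ((p^a - 1 : ℕ) : ℤ) := by
    push_cast [Nat.cast_sub hp1, Nat.cast_sub hq1]
    rw [mul_comm]
    exact h
  exact_mod_cast this

lemma sum_parity (a : ℕ) (hpo : p % 2 = 1) : (∑ i ∈ range a, p^i) % 2 = a % 2 := by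
  induction a with
  | zero => simp
  | succ n ih =>
    rw [Finset.sum_range_succ]
    have : p^n % 2 = 1 := Nat.odd_iff.mp ((Nat.odd_iff.mpr hpo).pow)
    omega

lemma pow_parity (t : ZMod p) (ht2 : t^2 = 1) (s b : ℕ) (h : s % 2 = b % 2) : t^s = t^b := by
  conv_lhs => rw [← Nat.div_add_mod s 2, pow_add, pow_mul, ht2, one_pow, one_mul, h]
  conv_rhs => rw [← Nat.div_add_mod b 2, pow_add, pow_mul, ht2, one_pow, one_mul]


lemma three_ne_zero' (hp3 : 3 < p) : (3 : ZMod p) ≠ 0 := by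
  have : ((3:ℕ) : ZMod p) ≠ 0 := by
    rw [Ne, ZMod.natCast_eq_zero_iff]
    intro h
    have := Nat.le_of_dvd (by norm_num) h
    omega
  simpa using this

lemma sigma_eq (hp3 : 3 < p) (a : ℕ) :
    ((jacobiSym ((p:ℤ)^a) 3 : ℤ) : ZMod p) = (-3:ZMod p)^((p^a-1)/2) := by
  have hpp : p.Prime := Fact.out
  have hpo : p % 2 = 1 := by rcases hpp.eq_two_or_odd with h|h <;> omega
  have hneg3 : (-3:ZMod p) ≠ 0 := neg_ne_zero.mpr (three_ne_zero' hp3)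
  set s := ∑ i ∈ range a, p^i with hs
  have hgs := geom_nat (p := p) a (by omega)
  have hu : p - 1 = 2*(p/2) := by omega
  have hdiv : (p^a - 1)/2 = (p/2) * s := by
    have h2 : p^a - 1 = 2*((p/2)*s) := by rw [← hgs, hu, mul_assoc]
    omega
  have ht2 : ((-3:ZMod p)^(p/2))^2 = 1 := by
    rw [← pow_mul, show p/2*2 = p - 1 from by omega, ZMod.pow_card_sub_one_eq_one hneg3]
  have ht : ((jacobiSym ((p:ℤ)) 3 : ℤ) : ZMod p) = (-3:ZMod p)^(p/2) := by
    rw [← jac_eq hp3, ← jacobiSym.legendreSym.to_jacobiSym, legendreSym.eq_pow]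
    push_cast
    ring
  rw [jacobiSym.pow_left]
  push_cast
  rw [ht, hdiv, pow_mul]
  exact pow_parity _ ht2 a s (sum_parity a hpo).symm

end S18

theorem stmt_18 (p : ℕ) [Fact p.Prime] (hp3 : 3 < p) (hp7 : p ≠ 7) (a : ℕ) (ha : 0 < a) :
    let ε : ZMod p := (jacobiSym ((p : ℤ) ^ a) 3 : ZMod p)
    ∀ d : ℤ, -1 ≤ d → d ≤ (p : ℤ) ^ a →
      (2 ∣ d →
        (∑ k ∈ Finset.range (p ^ a),
            (3 : ZMod p) ^ k * ((8 : ZMod p) ^ k)⁻¹ * (ibinom (3 * k) ((k : ℤ) + d) : ZMod p)) =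
          (-3 : ZMod p) ^ (d / 2) * (1 + 27 * ε) * (28 : ZMod p)⁻¹) ∧
      (¬ (2 ∣ d) →
        (∑ k ∈ Finset.range (p ^ a),
            (3 : ZMod p) ^ k * ((8 : ZMod p) ^ k)⁻¹ * (ibinom (3 * k) ((k : ℤ) + d) : ZMod p)) =
          (-3 : ZMod p) ^ ((d + 3) / 2) * (1 - ε) * (28 : ZMod p)⁻¹) := by
  intro ε d hd1 hd2
  have hε : ε = ((jacobiSym ((p : ℤ) ^ a) 3 : ℤ) : ZMod p) := rfl
  have hpp : p.Prime := Fact.out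
  have hpo : p % 2 = 1 := by rcases hpp.eq_two_or_odd with h|h <;> omega
  set q := p^a with hqdef
  have hq5 : 5 ≤ q := by
    have : p ≤ p^a := Nat.le_self_pow (by omega) p
    omega
  have hqodd : q % 2 = 1 := Nat.odd_iff.mp ((Nat.odd_iff.mpr hpo).pow)
  have hqz : ((q:ℕ):ℤ) = (p:ℤ)^a := by rw [hqdef]; push_cast; ring
  have h3 : (3 : ZMod p) ≠ 0 := S18.three_ne_zero' hp3
  have hneg3 : (-3 : ZMod p) ≠ 0 := neg_ne_zero.mpr h3
  have h8 : (8 : ZMod p) ≠ 0 := by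
    have : ((8:ℕ) : ZMod p) ≠ 0 := by
      rw [Ne, ZMod.natCast_eq_zero_iff]
      intro h
      have := Nat.le_of_dvd (by norm_num) h
      have := hpp.two_le
      interval_cases p <;> omega
    simpa using this
  have h28 : (28 : ZMod p) ≠ 0 := by
    have : ((28:ℕ) : ZMod p) ≠ 0 := by
      rw [Ne, ZMod.natCast_eq_zero_iff]
      intro h
      have := Nat.le_of_dvd (by norm_num) h
      interval_cases p <;> omega
    simpa using this
  have hne28' : ((-27:ZMod p) - 1) ≠ 0 := by
    intro h
    apply h28
    linear_combination -h
  -- x = 3/8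
  set x : ZMod p := (3:ZMod p) * (8:ZMod p)⁻¹ with hxdef
  have hx : (8:ZMod p) * x = 3 := by
    rw [hxdef, mul_comm (3:ZMod p), ← mul_assoc, mul_inv_cancel₀ h8, one_mul]
  have hG := S18.G_eq hp3 a x hx (S18.key_poly hp3 a x hx)
  -- -3 facts
  have hm1 : (-3:ZMod p)^(q-1) = 1 := by
    rw [hqdef, ← S18.geom_nat (p := p) a (by omega), pow_mul,
      ZMod.pow_card_sub_one_eq_one hneg3, one_pow]
  have hsig : ε = (-3:ZMod p)^((q-1)/2) := by rw [hε, S18.sigma_eq hp3 a]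
  have hε2 : ε * ε = 1 := by
    rw [hsig, ← pow_add, show (q-1)/2 + (q-1)/2 = q - 1 from by omega, hm1]
  have hσ27 : (-27:ZMod p)^((q-1)/2) = ε := by
    rw [show (-27:ZMod p) = (-3)^3 from by norm_num, ← pow_mul, mul_comm 3 ((q-1)/2), pow_mul,
      ← hsig, pow_succ, pow_two, hε2, one_mul]
  have hne27 : (-27:ZMod p) ≠ 1 := by
    intro h
    apply h28
    linear_combination -h
  -- the sum as coefficient
  have hS : ∀ n : ℕ, ((n:ℤ) = (q:ℤ) - 1 + d) →
      (∑ k ∈ Finset.range q,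
          (3 : ZMod p) ^ k * ((8 : ZMod p) ^ k)⁻¹ * (ibinom (3 * k) ((k : ℤ) + d) : ZMod p))
        = ∑ j ∈ range q, (-3:ZMod p)^j *
            (if 2*j ≤ n then (if n-2*j < q then ((-3:ZMod p)^(q-1-(n-2*j))) else 0) else 0) := by
    intro n hn
    have h1 : (∑ k ∈ Finset.range q,
        (3 : ZMod p) ^ k * ((8 : ZMod p) ^ k)⁻¹ * (ibinom (3 * k) ((k : ℤ) + d) : ZMod p))
        = (∑ k ∈ range q, C (x^k) * (1+X)^(3*k) * X^(q-1-k)).coeff n := by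
      rw [S18.coeffG]
      refine Finset.sum_congr rfl fun k hk => ?_
      simp only [mem_range] at hk
      have hxk : (3:ZMod p)^k * ((8:ZMod p)^k)⁻¹ = x^k := by
        rw [hxdef, mul_pow, inv_pow]
      rw [hxk]
      congr 1
      by_cases hkd : (0:ℤ) ≤ (k:ℤ) + d
      · rw [if_pos (by omega)]
        rw [ibinom, if_pos hkd]
        have harg : ((k:ℤ)+d).toNat = n - (q-1-k) := by omega
        rw [harg]
      · rw [if_neg (by omega), ibinom, if_neg hkd]
        simp
    rw [h1, hG, S18.coeffH]
  constructor
  · -- even case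
    intro hdvd
    have hd0 : (0:ℤ) ≤ d := by omega
    set en := d.toNat / 2 with hendef
    have hen2 : 2*(en:ℤ) = d := by omega
    set n := q - 1 + 2*en with hndef
    have hn : (n:ℤ) = (q:ℤ) - 1 + d := by push_cast [hndef]; omega
    have h2en : 2*en ≤ q-1 := by omega
    have hiff : ∀ j, (j < q ∧ 2*j ≤ n ∧ n - 2*j < q) ↔ (en ≤ j ∧ j ≤ (q-1)/2 + en) := by
      intro j; omega
    have hgeo := S18.sumIco q n en ((q-1)/2+en) hm1 (by omega) (by omega) hiff
    have hgm := geom_sum_Ico_mul (-27:ZMod p) (show en ≤ (q-1)/2+en+1 by omega)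
    rw [hS n hn]
    rw [show d/2 = (en:ℤ) from by omega, zpow_natCast]
    set c : ZMod p := (-3:ZMod p)^n * (((-27:ZMod p) - 1) * 28) with hcdef
    have hcne : c ≠ 0 := mul_ne_zero (pow_ne_zero _ hneg3) (mul_ne_zero hne28' h28)
    apply mul_left_cancel₀ hcne
    have hprod : (-3:ZMod p)^n * (-3:ZMod p)^en = (-27:ZMod p)^en := by
      rw [← pow_add, show n + en = (q-1) + 3*en from by omega, pow_add, hm1, one_mul,
        show (-27:ZMod p) = (-3)^3 from by norm_num, ← pow_mul]
    have hj1pow : (-27:ZMod p)^((q-1)/2+en+1) = ε * ((-27:ZMod p)^en * (-27)) := by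
      rw [pow_succ, pow_add, hσ27]
      ring
    have hL : c * (∑ j ∈ range q, (-3:ZMod p)^j *
            (if 2*j ≤ n then (if n-2*j < q then ((-3:ZMod p)^(q-1-(n-2*j))) else 0) else 0))
        = 28 * ((-27:ZMod p)^((q-1)/2+en+1) - (-27:ZMod p)^en) := by
      calc c * _ = (((-27:ZMod p) - 1) * 28) * ((-3:ZMod p)^n * _) := by rw [hcdef]; ring
        _ = (((-27:ZMod p) - 1) * 28) * (∑ j ∈ Ico en ((q-1)/2+en+1), (-27:ZMod p)^j) := by
              rw [hgeo]
        _ = 28 * ((∑ j ∈ Ico en ((q-1)/2+en+1), (-27:ZMod p)^j) * ((-27:ZMod p) - 1)) := by ring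
        _ = 28 * ((-27:ZMod p)^((q-1)/2+en+1) - (-27:ZMod p)^en) := by rw [hgm]
    have hR : c * ((-3:ZMod p)^en * (1 + 27*ε) * (28:ZMod p)⁻¹)
        = 28 * ((-27:ZMod p)^((q-1)/2+en+1) - (-27:ZMod p)^en) := by
      have h1 : c * ((-3:ZMod p)^en * (1 + 27*ε) * (28:ZMod p)⁻¹)
          = ((28:ZMod p) * (28:ZMod p)⁻¹) * (((-27:ZMod p) - 1) *
              (((-3:ZMod p)^n * (-3:ZMod p)^en) * (1 + 27*ε))) := by
        rw [hcdef]; ring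
      rw [h1, mul_inv_cancel₀ h28, one_mul, hprod, hj1pow]
      ring
    rw [hL, ← hR]
  · -- odd case
    intro hdvd
    set fn := (d+1).toNat / 2 with hfndef
    have hfn2 : 2*(fn:ℤ) = d + 1 := by omega
    set n := q - 2 + 2*fn with hndef
    have hn : (n:ℤ) = (q:ℤ) - 1 + d := by push_cast [hndef]; omega
    have h2fn : 2*fn ≤ q+1 := by omega
    have hiff : ∀ j, (j < q ∧ 2*j ≤ n ∧ n - 2*j < q) ↔ (fn ≤ j ∧ j ≤ (q-1)/2 + fn - 1) := by
      intro j; omega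
    have hgeo := S18.sumIco q n fn ((q-1)/2+fn-1) hm1 (by omega) (by omega) hiff
    have hj11 : (q-1)/2 + fn - 1 + 1 = (q-1)/2 + fn := by omega
    rw [hj11] at hgeo
    have hgm := geom_sum_Ico_mul (-27:ZMod p) (show fn ≤ (q-1)/2+fn by omega)
    rw [hS n hn]
    rw [show (d+3)/2 = ((fn:ℤ)+1) from by omega, show ((fn:ℤ)+1) = (((fn+1:ℕ)):ℤ) from by
      push_cast; ring, zpow_natCast]
    set c : ZMod p := (-3:ZMod p)^n * (((-27:ZMod p) - 1) * 28) with hcdef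
    have hcne : c ≠ 0 := mul_ne_zero (pow_ne_zero _ hneg3) (mul_ne_zero hne28' h28)
    apply mul_left_cancel₀ hcne
    have hprod : (-3:ZMod p)^n * (-3:ZMod p)^(fn+1) = (-27:ZMod p)^fn := by
      rw [← pow_add, show n + (fn+1) = (q-1) + 3*fn from by omega, pow_add, hm1, one_mul,
        show (-27:ZMod p) = (-3)^3 from by norm_num, ← pow_mul]
    have hj1pow : (-27:ZMod p)^((q-1)/2+fn) = ε * (-27:ZMod p)^fn := by
      rw [pow_add, hσ27]
    have hL : c * (∑ j ∈ range q, (-3:ZMod p)^j *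
            (if 2*j ≤ n then (if n-2*j < q then ((-3:ZMod p)^(q-1-(n-2*j))) else 0) else 0))
        = 28 * ((-27:ZMod p)^((q-1)/2+fn) - (-27:ZMod p)^fn) := by
      calc c * _ = (((-27:ZMod p) - 1) * 28) * ((-3:ZMod p)^n * _) := by rw [hcdef]; ring
        _ = (((-27:ZMod p) - 1) * 28) * (∑ j ∈ Ico fn ((q-1)/2+fn), (-27:ZMod p)^j) := by
              rw [hgeo]
        _ = 28 * ((∑ j ∈ Ico fn ((q-1)/2+fn), (-27:ZMod p)^j) * ((-27:ZMod p) - 1)) := by ring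
        _ = 28 * ((-27:ZMod p)^((q-1)/2+fn) - (-27:ZMod p)^fn) := by rw [hgm]
    have hR : c * ((-3:ZMod p)^(fn+1) * (1 - ε) * (28:ZMod p)⁻¹)
        = 28 * ((-27:ZMod p)^((q-1)/2+fn) - (-27:ZMod p)^fn) := by
      have h1 : c * ((-3:ZMod p)^(fn+1) * (1 - ε) * (28:ZMod p)⁻¹)
          = ((28:ZMod p) * (28:ZMod p)⁻¹) * (((-27:ZMod p) - 1) *
              (((-3:ZMod p)^n * (-3:ZMod p)^(fn+1)) * (1 - ε))) := by
        rw [hcdef]; ring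
      rw [h1, mul_inv_cancel₀ h28, one_mul, hprod, hj1pow]
      ring
    rw [hL, ← hR]
end

section
/- Let p be an odd prime, let a be a positive integer, and let A, B be integers with Δ = A² − 4B not divisible by p. Let u, v : ℕ → ℤ be the Lucas sequences with parameters (A, B): u_0 = 0, u_1 = 1, v_0 = 2, v_1 = A, and u_{n+1} = A·u_n − B·u_{n−1}, v_{n+1} = A·v_n − B·v_{n−1} for n ≥ 1. Let ε = J(Δ | p^a) be the Jacobi symbol. Then for every n ∈ ℕ: (1) 2·u_{n+p^a} ≡ A·u_n + ε·v_n (mod p); (2) 2·B·u_n ≡ A·u_{n+p^a} − ε·v_{n+p^a} (mod p). -/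
/-!
In a field of characteristic `p` containing a square root `d` of `Δ`, the roots
`α, β = (A ± d) / 2` of `X² - A X + B` give `uₙ d = αⁿ - βⁿ` and `vₙ = αⁿ + βⁿ`. Frobenius fixes
`A` and sends `d` to `Δ^((p-1)/2) d`, and by Euler's criterion `Δ^((p-1)/2) ≡ J(Δ | p)`; hence
`u_{p^a} ≡ ε` and `v_{p^a} ≡ A (mod p)`. Both congruences then follow from the addition formulas
`2 u_{m+n} = u_m v_n + v_m u_n` and `2 v_{m+n} = v_m v_n + Δ u_m u_n` at `m = p^a`, the second
one also using `ε² = 1`.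
-/

structure IsLucasPair {R : Type*} [CommRing R] (A B : R) (u v : ℕ → R) : Prop where
  u_zero : u 0 = 0
  u_one : u 1 = 1
  v_zero : v 0 = 2
  v_one : v 1 = A
  u_rec : ∀ n, u (n + 2) = A * u (n + 1) - B * u n
  v_rec : ∀ n, v (n + 2) = A * v (n + 1) - B * v n

namespace IsLucasPair

variable {R S : Type*} [CommRing R] [CommRing S] {A B : R} {u v : ℕ → R}

theorem map (h : IsLucasPair A B u v) (f : R →+* S) :
    IsLucasPair (f A) (f B) (fun n => f (u n)) (fun n => f (v n)) where
  u_zero := by simp [h.u_zero]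
  u_one := by simp [h.u_one]
  v_zero := by rw [h.v_zero, map_ofNat]
  v_one := by simp [h.v_one]
  u_rec n := by simp [h.u_rec]
  v_rec n := by simp [h.v_rec]

theorem u_mul_sub_eq_pow_sub_pow (h : IsLucasPair A B u v) {α β : R} (hA : α + β = A)
    (hB : α * β = B) (n : ℕ) : u n * (α - β) = α ^ n - β ^ n := by
  subst hA hB
  induction n using Nat.twoStepInduction with
  | zero => simp [h.u_zero]
  | one => simp [h.u_one]
  | more n ih₀ ih₁ => rw [h.u_rec]; linear_combination (α + β) * ih₁ - α * β * ih₀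

theorem v_eq_pow_add_pow (h : IsLucasPair A B u v) {α β : R} (hA : α + β = A)
    (hB : α * β = B) (n : ℕ) : v n = α ^ n + β ^ n := by
  subst hA hB
  induction n using Nat.twoStepInduction with
  | zero => rw [h.v_zero]; ring
  | one => rw [h.v_one]; ring
  | more n ih₀ ih₁ => rw [h.v_rec]; linear_combination (α + β) * ih₁ - α * β * ih₀

theorem two_mul_u_succ (h : IsLucasPair A B u v) (n : ℕ) :
    2 * u (n + 1) = A * u n + v n := by
  induction n using Nat.twoStepInduction with
  | zero => rw [h.u_one, h.u_zero, h.v_zero]; ring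
  | one => rw [h.u_rec 0, h.u_one, h.u_zero, h.v_one]; ring
  | more n ih₀ ih₁ =>
    rw [h.u_rec (n + 1), h.v_rec]
    -- `linear_combination` treats `u (n + 1 + 1)` and `u (n + 2)` as different atoms
    simp only [add_assoc, Nat.reduceAdd] at ih₁ ⊢
    linear_combination A * ih₁ - B * ih₀ - A * h.u_rec n

theorem two_mul_v_succ (h : IsLucasPair A B u v) (n : ℕ) :
    2 * v (n + 1) = A * v n + (A ^ 2 - 4 * B) * u n := by
  induction n using Nat.twoStepInduction with
  | zero => rw [h.v_one, h.u_zero, h.v_zero]; ring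
  | one => rw [h.v_rec 0, h.v_one, h.u_one, h.v_zero]; ring
  | more n ih₀ ih₁ =>
    rw [h.v_rec (n + 1), h.u_rec]
    simp only [add_assoc, Nat.reduceAdd] at ih₁ ⊢
    linear_combination A * ih₁ - B * ih₀ - A * h.v_rec n

theorem two_mul_u_add (h : IsLucasPair A B u v) (m n : ℕ) :
    2 * u (m + n) = u m * v n + v m * u n := by
  induction n using Nat.twoStepInduction with
  | zero => rw [add_zero, h.u_zero, h.v_zero]; ring
  | one => rw [h.two_mul_u_succ, h.v_one, h.u_one]; ring
  | more n ih₀ ih₁ =>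
    rw [← add_assoc, h.u_rec, h.u_rec, h.v_rec]
    linear_combination A * ih₁ - B * ih₀

theorem two_mul_v_add (h : IsLucasPair A B u v) (m n : ℕ) :
    2 * v (m + n) = v m * v n + (A ^ 2 - 4 * B) * u m * u n := by
  induction n using Nat.twoStepInduction with
  | zero => rw [add_zero, h.u_zero, h.v_zero]; ring
  | one => rw [h.two_mul_v_succ, h.v_one, h.u_one]; ring
  | more n ih₀ ih₁ =>
    rw [← add_assoc, h.v_rec, h.u_rec, h.v_rec]
    linear_combination A * ih₁ - B * ih₀

end IsLucasPair

theorem pow_prime_pow_eq_of_sq_eq {p : ℕ} [Fact p.Prime] (hp2 : p ≠ 2) {S : Type*} [CommRing S]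
    [Algebra (ZMod p) S] {Δ : ZMod p} {d : S} (hd : d ^ 2 = algebraMap (ZMod p) S Δ) (a : ℕ) :
    d ^ p ^ a = algebraMap (ZMod p) S ((Δ ^ (p / 2)) ^ a) * d := by
  have hdp : d ^ p = algebraMap (ZMod p) S (Δ ^ (p / 2)) * d := by
    conv_lhs => rw [← Nat.two_mul_div_two_add_one_of_odd ((Fact.out : p.Prime).odd_of_ne_two hp2)]
    rw [pow_succ, pow_mul, hd, map_pow]
  induction a with
  | zero => simp
  | succ a ih =>
    rw [pow_succ, pow_mul, ih, mul_pow, hdp, ← map_pow, ZMod.pow_card, pow_succ, map_mul]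
    ring

theorem IsLucasPair.u_prime_pow_eq_and_v_prime_pow_eq {p : ℕ} [Fact p.Prime] (hp2 : p ≠ 2)
    {A B : ZMod p} {u v : ℕ → ZMod p} (h : IsLucasPair A B u v) (hΔ : A ^ 2 - 4 * B ≠ 0) (a : ℕ) :
    u (p ^ a) = ((A ^ 2 - 4 * B) ^ (p / 2)) ^ a ∧ v (p ^ a) = A := by
  set f := algebraMap (ZMod p) (AlgebraicClosure (ZMod p))
  obtain ⟨d, hd⟩ := IsAlgClosed.exists_eq_mul_self (f (A ^ 2 - 4 * B))
  have h2 : (2 : AlgebraicClosure (ZMod p)) ≠ 0 :=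
    Ring.two_ne_zero (by rw [ringChar.eq (AlgebraicClosure (ZMod p)) p]; exact hp2)
  have hd0 : d ≠ 0 := by
    rintro rfl
    exact hΔ (f.injective (by rw [hd, mul_zero, map_zero]))
  have hsum : (f A + d) / 2 + (f A - d) / 2 = f A := by field_simp; ring
  have hprod : (f A + d) / 2 * ((f A - d) / 2) = f B := by
    rw [map_sub, map_mul, map_pow, map_ofNat] at hd
    field_simp
    linear_combination hd
  have hsub : (f A + d) / 2 - (f A - d) / 2 = d := by field_simp; ring
  have hK := h.map f
  constructor
  · apply f.injective
    apply mul_right_cancel₀ hd0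
    rw [← hsub, hK.u_mul_sub_eq_pow_sub_pow hsum hprod, ← sub_pow_char_pow, hsub,
      pow_prime_pow_eq_of_sq_eq hp2 (by rw [sq, ← hd]) a]
  · apply f.injective
    rw [hK.v_eq_pow_add_pow hsum hprod, ← add_pow_char_pow, hsum, ← map_pow, ZMod.pow_card_pow]

theorem stmt_19_general (p : ℕ) (hp : p.Prime) (hp2 : p ≠ 2) (a : ℕ)
    (A B : ℤ) (hΔ : ¬ ((p : ℤ) ∣ A ^ 2 - 4 * B))
    (u v : ℕ → ℤ)
    (hu0 : u 0 = 0) (hu1 : u 1 = 1)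
    (hv0 : v 0 = 2) (hv1 : v 1 = A)
    (hurec : ∀ n : ℕ, u (n + 2) = A * u (n + 1) - B * u n)
    (hvrec : ∀ n : ℕ, v (n + 2) = A * v (n + 1) - B * v n) :
    let ε : ℤ := jacobiSym (A ^ 2 - 4 * B) (p ^ a)
    ∀ n : ℕ,
      2 * u (n + p ^ a) ≡ A * u n + ε * v n [ZMOD (p : ℤ)] ∧
      2 * B * u n ≡ A * u (n + p ^ a) - ε * v (n + p ^ a) [ZMOD (p : ℤ)] := by
  intro ε n
  have := Fact.mk hp
  have hΔp : (A : ZMod p) ^ 2 - 4 * B ≠ 0 := by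
    exact_mod_cast (ZMod.intCast_zmod_eq_zero_iff_dvd _ p).not.mpr hΔ
  have hε : ε = legendreSym p (A ^ 2 - 4 * B) ^ a := by
    rw [jacobiSym.legendreSym.to_jacobiSym, ← jacobiSym.pow_right]
  have hε2 : (ε : ZMod p) ^ 2 = 1 := by
    rw [← Int.cast_pow, hε, ← pow_mul, mul_comm a 2, pow_mul,
      legendreSym.sq_one p (by exact_mod_cast hΔp), one_pow, Int.cast_one]
  have hL := (IsLucasPair.mk hu0 hu1 hv0 hv1 hurec hvrec).map (Int.castRingHom (ZMod p))
  obtain ⟨hum, hvm⟩ := hL.u_prime_pow_eq_and_v_prime_pow_eq hp2 (by simpa using hΔp) a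
  have hU := hL.two_mul_u_add (p ^ a) n
  have hV := hL.two_mul_v_add (p ^ a) n
  simp only [eq_intCast] at hum hvm hU hV
  have hεu : (u (p ^ a) : ZMod p) = ε := by
    rw [hum, hε, Int.cast_pow, legendreSym.eq_pow]
    push_cast
    rfl
  rw [hεu, hvm] at hU hV
  have h2 : (2 : ZMod p) ≠ 0 := Ring.two_ne_zero (by rw [ZMod.ringChar_zmod_n]; exact hp2)
  rw [add_comm n]
  simp only [← ZMod.intCast_eq_intCast_iff]
  push_cast
  constructor
  · linear_combination hU
  · apply mul_left_cancel₀ h2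
    linear_combination -A * hU + ε * hV + (A ^ 2 - 4 * B) * u n * hε2

theorem stmt_19 (p : ℕ) (hp : p.Prime) (hp2 : p ≠ 2) (a : ℕ) (ha : 0 < a)
    (A B : ℤ) (hΔ : ¬ ((p : ℤ) ∣ A ^ 2 - 4 * B))
    (u v : ℕ → ℤ)
    (hu0 : u 0 = 0) (hu1 : u 1 = 1)
    (hv0 : v 0 = 2) (hv1 : v 1 = A)
    (hurec : ∀ n : ℕ, u (n + 2) = A * u (n + 1) - B * u n)
    (hvrec : ∀ n : ℕ, v (n + 2) = A * v (n + 1) - B * v n) :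
    let ε : ℤ := jacobiSym (A ^ 2 - 4 * B) (p ^ a)
    ∀ n : ℕ,
      2 * u (n + p ^ a) ≡ A * u n + ε * v n [ZMOD (p : ℤ)] ∧
      2 * B * u n ≡ A * u (n + p ^ a) - ε * v (n + p ^ a) [ZMOD (p : ℤ)] :=
  stmt_19_general p hp hp2 a A B hΔ u v hu0 hu1 hv0 hv1 hurec hvrec
end
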